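/- arXiv:2307.16007 — 11 statements merged into one kernel-verified Lean document; each statement's English description precedes it below -/
import Mathlib

section
/- Let n be a positive integer, let p_1 < p_2 < ... < p_n be distinct positive real numbers, and let r be a positive real number. Then the Kwong matrix K_r(p_1,...,p_n) is singular if and only if r is an odd integer with r < n. -/
/-!
For odd `k`, `(x^k + y^k)/(x + y) = ∑_{t<k} x^t (-y)^(k-1-t)`, so `K_k` factors through `ℝ^k`
and has rank at most `k`, which is `< n`.

Conversely, clearing the denominators `pᵢ + pⱼ` in `K_r c = 0` gives polynomials `a, b` of degree
`< n` (the numerators of `∑ⱼ cⱼ/(X + pⱼ)` and `∑ⱼ cⱼ pⱼ^r/(X + pⱼ)`) with `x^r a(x) + b(x) = 0` at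
each `x = pᵢ`. Evaluating at `-pᵢ` shows that `x^r a(-x) - b(-x) = 0` there as well, and that
`a(-pⱼ) = cⱼ ∏_{k≠j} (p_k - pⱼ)`.
Adding or subtracting the two relations keeps, for each `k < n`, either the term `a_k x^(r+k)` or
the term `b_k x^k`, according to the parity of `k`. The resulting generalized polynomials have `n`
exponents, which are distinct unless `r` is an odd integer `< n`, and `n` positive zeros; by
Rolle's theorem such a sum vanishes identically. Hence `a = 0`, and then `c = 0`.
-/

open Matrix

/-- The Kwong matrix: (i,j) entry is `(p i ^ r + p j ^ r) / (p i + p j)`. -/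
noncomputable def kwong {n : ℕ} (p : Fin n → ℝ) (r : ℝ) : Matrix (Fin n) (Fin n) ℝ :=
  Matrix.of fun i j => (p i ^ r + p j ^ r) / (p i + p j)

lemma kwong_isHermitian {n : ℕ} (p : Fin n → ℝ) (r : ℝ) : (kwong p r).IsHermitian := by
  ext i j
  simp only [kwong, Matrix.conjTranspose_apply, Matrix.of_apply, star_trivial]
  rw [add_comm (p j ^ r), add_comm (p j)]

/-- The inertia of a real symmetric matrix: the numbers of positive, zero and
negative eigenvalues, counted with multiplicity. -/
noncomputable def inertia {n : ℕ} (A : Matrix (Fin n) (Fin n) ℝ) (hA : A.IsHermitian) :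
    ℕ × ℕ × ℕ :=
  ({i | 0 < hA.eigenvalues i}.ncard, {i | hA.eigenvalues i = 0}.ncard,
    {i | hA.eigenvalues i < 0}.ncard)

open Finset Polynomial Function Set

theorem exists_strictMono_deriv_eq_zero_interlacing {m : ℕ} {f f' : ℝ → ℝ}
    {x : Fin (m + 1) → ℝ} (hx : StrictMono x)
    (hf : ∀ y ∈ Icc (x 0) (x (Fin.last m)), HasDerivAt f (f' y) y) (hzero : ∀ i, f (x i) = 0) :
    ∃ y : Fin m → ℝ, StrictMono y ∧ ∀ i, y i ∈ Ioo (x i.castSucc) (x i.succ) ∧ f' (y i) = 0 := by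
  have hsub (i : Fin m) : Icc (x i.castSucc) (x i.succ) ⊆ Icc (x 0) (x (Fin.last m)) :=
    Icc_subset_Icc (hx.monotone (Fin.zero_le _)) (hx.monotone (Fin.le_last _))
  have hrolle (i : Fin m) : ∃ y ∈ Ioo (x i.castSucc) (x i.succ), f' y = 0 :=
    exists_hasDerivAt_eq_zero (hx Fin.castSucc_lt_succ)
      (fun y hy => (hf y (hsub i hy)).continuousAt.continuousWithinAt)
      ((hzero _).trans (hzero _).symm) (fun y hy => hf y (hsub i (Ioo_subset_Icc_self hy)))
  choose y hy hy' using hrolle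
  refine ⟨y, fun i j hij => ?_, fun i => ⟨hy i, hy' i⟩⟩
  calc y i < x i.succ := (hy i).2
    _ ≤ x j.castSucc := hx.monotone (Fin.succ_le_castSucc_iff.mpr hij)
    _ < y j := (hy j).1

theorem eq_zero_of_sum_mul_rpow_eq_zero {m : ℕ} {μ : Fin m → ℝ} (hμ : Injective μ)
    {x : Fin m → ℝ} (hx : StrictMono x) (hxpos : ∀ i, 0 < x i) {c : Fin m → ℝ}
    (h : ∀ i, ∑ t, c t * x i ^ μ t = 0) : c = 0 := by
  induction m with
  | zero => exact Subsingleton.elim _ _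
  | succ m ih =>
    -- after dividing by `y ^ μ 0` the first term is constant, so Rolle removes it
    set g : ℝ → ℝ := fun y => ∑ t, c t * y ^ (μ t - μ 0)
    have hg (i : Fin (m + 1)) : g (x i) = 0 := by
      have hx0 : x i ^ μ 0 ≠ 0 := (Real.rpow_pos_of_pos (hxpos i) _).ne'
      have : x i ^ μ 0 * g (x i) = 0 := by
        rw [Finset.mul_sum, ← h i]
        refine sum_congr rfl fun t _ => ?_
        rw [Real.rpow_sub (hxpos i)]
        field_simp
      exact (mul_eq_zero.1 this).resolve_left hx0
    have hderiv : ∀ y ∈ Icc (x 0) (x (Fin.last m)),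
        HasDerivAt g (∑ t, c t * ((μ t - μ 0) * y ^ (μ t - μ 0 - 1))) y := fun y hy =>
      HasDerivAt.fun_sum fun t _ =>
        (Real.hasDerivAt_rpow_const (Or.inl ((hxpos 0).trans_le hy.1).ne')).const_mul (c t)
    obtain ⟨y, hy, hyx⟩ := exists_strictMono_deriv_eq_zero_interlacing hx hderiv hg
    have hc_succ : (fun t : Fin m => c t.succ * (μ t.succ - μ 0)) = 0 := by
      refine ih (μ := fun t => μ t.succ - μ 0 - 1) (fun a b hab => ?_) hy
        (fun i => (hxpos _).trans (hyx i).1.1) fun i => ?_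
      · exact Fin.succ_injective _ (hμ (by simpa using hab))
      · have := (hyx i).2
        simp only [Fin.sum_univ_succ, sub_self, zero_mul, mul_zero, zero_add] at this
        simpa only [mul_assoc] using this
    have hc (t : Fin m) : c t.succ = 0 :=
      (mul_eq_zero.1 (congrFun hc_succ t)).resolve_right
        (sub_ne_zero.2 (hμ.ne (Fin.succ_ne_zero t)))
    have hc0 : c 0 = 0 := by
      have := h 0
      simp only [Fin.sum_univ_succ, hc, zero_mul, sum_const_zero, add_zero] at this
      exact (mul_eq_zero.1 this).resolve_right (Real.rpow_pos_of_pos (hxpos 0) _).ne'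
    funext t
    exact Fin.cases hc0 hc t

theorem injective_ite_even_add_natCast {n : ℕ} {r : ℝ} (hr : 0 < r)
    (hr_odd : ¬∃ k : ℕ, Odd k ∧ r = k ∧ k < n) (s : ℕ) :
    Injective fun t : Fin n => if Even (t + s : ℕ) then r + t else (t : ℝ) := by
  have hne (k l : Fin n) (hk : Even (k + s : ℕ)) (hl : ¬Even (l + s : ℕ)) : r + k ≠ l := by
    intro h
    have hkl : (k : ℕ) < l := by exact_mod_cast (show (k : ℝ) < l by linarith)
    refine hr_odd ⟨l - k, ?_, ?_, by omega⟩
    · rw [← Nat.not_even_iff_odd, Nat.even_sub hkl.le]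
      rw [Nat.even_add] at hk hl
      tauto
    · push_cast [Nat.cast_sub hkl.le]
      linarith
  intro k l h
  simp only at h
  split_ifs at h with hk hl hl
  · exact Fin.ext (by exact_mod_cast add_left_cancel h)
  · exact (hne k l hk hl h).elim
  · exact (hne l k hl hk h.symm).elim
  · exact Fin.ext (by exact_mod_cast h)

theorem two_mul_sum_ite_even_add {n : ℕ} {a b : ℝ[X]} (ha : a.natDegree < n)
    (hb : b.natDegree < n) (r : ℝ) (s : ℕ) {x : ℝ} (hx : 0 < x) :
    2 * ∑ t : Fin n, (if Even (t + s : ℕ) then a.coeff t else b.coeff t) *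
        x ^ (if Even (t + s : ℕ) then r + t else (t : ℝ)) =
      (x ^ r * a.eval x + b.eval x) + (-1) ^ s * (x ^ r * a.eval (-x) - b.eval (-x)) := by
  rw [Fin.sum_univ_eq_sum_range (fun k => (if Even (k + s) then a.coeff k else b.coeff k) *
        x ^ (if Even (k + s) then r + k else (k : ℝ))),
    mul_sum]
  simp only [eval_eq_sum_range' ha, eval_eq_sum_range' hb, mul_sum, ← sum_sub_distrib,
    ← sum_add_distrib]
  refine sum_congr rfl fun k _ => ?_
  have hsign : (-1 : ℝ) ^ s * (-x) ^ k = (-1) ^ (k + s) * x ^ k := by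
    rw [neg_pow, pow_add]
    ring
  by_cases he : Even (k + s)
  · rw [if_pos he, if_pos he, Real.rpow_add hx, Real.rpow_natCast]
    have h1 : (-1 : ℝ) ^ s * (-x) ^ k = x ^ k := by rw [hsign, he.neg_one_pow, one_mul]
    linear_combination (b.coeff k - a.coeff k * x ^ r) * h1
  · rw [if_neg he, if_neg he, Real.rpow_natCast]
    have h1 : (-1 : ℝ) ^ s * (-x) ^ k = -x ^ k := by
      rw [hsign, (Nat.not_even_iff_odd.1 he).neg_one_pow, neg_one_mul]
    linear_combination (b.coeff k - a.coeff k * x ^ r) * h1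

theorem eq_zero_of_rpow_mul_eval_add_eval_eq_zero {n : ℕ} {p : Fin n → ℝ} (hpos : ∀ i, 0 < p i)
    (hmono : StrictMono p) {r : ℝ} (hr : 0 < r) (hr_odd : ¬∃ k : ℕ, Odd k ∧ r = k ∧ k < n)
    {a b : ℝ[X]} (ha : a.natDegree < n) (hb : b.natDegree < n)
    (hplus : ∀ i, p i ^ r * a.eval (p i) + b.eval (p i) = 0)
    (hminus : ∀ i, p i ^ r * a.eval (-p i) - b.eval (-p i) = 0) : a = 0 := by
  ext k
  rw [coeff_zero]
  rcases lt_or_ge k n with hk | hk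
  · -- `Even (k + k)`: with parity shift `k`, the coefficient `a_k` is one of the unknowns
    have hsum (i : Fin n) : ∑ t : Fin n, (if Even (t + k : ℕ) then a.coeff t else b.coeff t) *
        p i ^ (if Even (t + k : ℕ) then r + t else (t : ℝ)) = 0 := by
      have := two_mul_sum_ite_even_add ha hb r k (hpos i)
      rw [hplus, hminus, mul_zero, add_zero] at this
      exact (mul_eq_zero.1 this).resolve_left two_ne_zero
    have := congrFun (eq_zero_of_sum_mul_rpow_eq_zero
      (injective_ite_even_add_natCast hr hr_odd k) hmono hpos hsum) ⟨k, hk⟩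
    simpa using this
  · exact coeff_eq_zero_of_natDegree_lt (ha.trans_le hk)

section PartialFraction

variable {ι R : Type*} [Fintype ι] [DecidableEq ι] [CommRing R]

/-- The numerator of `∑ⱼ wⱼ / (X + pⱼ)` over the common denominator `∏ⱼ (X + pⱼ)`. -/
noncomputable def partialFracNum (p w : ι → R) : R[X] :=
  ∑ j, C (w j) * Lagrange.nodal (univ.erase j) (-p)

theorem eval_partialFracNum (p w : ι → R) (x : R) :
    (partialFracNum p w).eval x = ∑ j, w j * ∏ k ∈ univ.erase j, (x + p k) := by
  simp [partialFracNum, eval_finsetSum, Lagrange.eval_nodal]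

theorem eval_neg_partialFracNum (p w : ι → R) (j : ι) :
    (partialFracNum p w).eval (-p j) = w j * ∏ k ∈ univ.erase j, (p k - p j) := by
  rw [eval_partialFracNum, sum_eq_single j (fun l _ hlj => ?_) (by simp)]
  · simp_rw [neg_add_eq_sub]
  · exact mul_eq_zero_of_right _ (prod_eq_zero (mem_erase.2 ⟨hlj.symm, mem_univ j⟩) (by ring))

theorem natDegree_partialFracNum_lt [Nontrivial R] [Nonempty ι] (p w : ι → R) :
    (partialFracNum p w).natDegree < Fintype.card ι := by
  have hdeg (j : ι) : (C (w j) * Lagrange.nodal (univ.erase j) (-p)).natDegree ≤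
      Fintype.card ι - 1 := by
    refine (natDegree_C_mul_le _ _).trans ?_
    rw [Lagrange.natDegree_nodal, card_erase_of_mem (mem_univ _), card_univ]
  exact (natDegree_sum_le_of_forall_le _ _ fun j _ => hdeg j).trans_lt
    (Nat.sub_lt Fintype.card_pos one_pos)

end PartialFraction

theorem rpow_mul_eval_partialFracNum_add_eq_zero {n : ℕ} {p : Fin n → ℝ} (hpos : ∀ i, 0 < p i)
    {r : ℝ} {c : Fin n → ℝ} (hc : kwong p r *ᵥ c = 0) (i : Fin n) :
    p i ^ r * (partialFracNum p c).eval (p i) +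
      (partialFracNum p fun j => c j * p j ^ r).eval (p i) = 0 := by
  have key : (kwong p r *ᵥ c) i * ∏ k, (p i + p k) = p i ^ r * (partialFracNum p c).eval (p i) +
      (partialFracNum p fun j => c j * p j ^ r).eval (p i) := by
    simp only [mulVec, dotProduct, kwong, of_apply, sum_mul, eval_partialFracNum, mul_sum,
      ← sum_add_distrib]
    refine sum_congr rfl fun j _ => ?_
    have hij : p i + p j ≠ 0 := (add_pos (hpos i) (hpos j)).ne'
    rw [← mul_prod_erase univ _ (mem_univ j)]
    field_simp
  rw [← key, hc, Pi.zero_apply, zero_mul]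

theorem kwong_det_ne_zero {n : ℕ} {p : Fin n → ℝ} (hpos : ∀ i, 0 < p i) (hmono : StrictMono p)
    {r : ℝ} (hr : 0 < r) (hr_odd : ¬∃ k : ℕ, Odd k ∧ r = k ∧ k < n) : (kwong p r).det ≠ 0 := by
  intro hdet
  obtain ⟨c, hc, hKc⟩ := exists_mulVec_eq_zero_iff.2 hdet
  obtain ⟨j, hj⟩ := Function.ne_iff.1 hc
  have : Nonempty (Fin n) := ⟨j⟩
  have hA : partialFracNum p c = 0 := by
    refine eq_zero_of_rpow_mul_eval_add_eval_eq_zero hpos hmono hr hr_odd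
      (by simpa using natDegree_partialFracNum_lt p c)
      (by simpa using natDegree_partialFracNum_lt p fun j => c j * p j ^ r)
      (rpow_mul_eval_partialFracNum_add_eq_zero hpos hKc) fun i => ?_
    rw [eval_neg_partialFracNum, eval_neg_partialFracNum]
    ring
  have hAj := eval_neg_partialFracNum p c j
  rw [hA, eval_zero] at hAj
  refine hj ((mul_eq_zero.1 hAj.symm).resolve_right (prod_ne_zero_iff.2 fun k hk => ?_))
  exact sub_ne_zero.2 (hmono.injective.ne (ne_of_mem_erase hk))

theorem kwong_natCast_eq_mul {n k : ℕ} {p : Fin n → ℝ} (hpos : ∀ i, 0 < p i) (hk : Odd k) :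
    kwong p k =
      (of fun i (t : Fin k) => p i ^ (t : ℕ)) * of fun (t : Fin k) j => (-p j) ^ (k - 1 - t) := by
  ext i j
  have hgeom := geom_sum₂_mul (p i) (-p j) k
  rw [hk.neg_pow, sub_neg_eq_add, sub_neg_eq_add] at hgeom
  rw [kwong, of_apply, mul_apply, Real.rpow_natCast, Real.rpow_natCast, ← hgeom,
    mul_div_cancel_right₀ _ (add_pos (hpos i) (hpos j)).ne', ← Fin.sum_univ_eq_sum_range]
  rfl

theorem kwong_natCast_det_eq_zero {n k : ℕ} {p : Fin n → ℝ} (hpos : ∀ i, 0 < p i) (hk : Odd k)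
    (hkn : k < n) : (kwong p k).det = 0 := by
  rw [kwong_natCast_eq_mul hpos hk]
  by_contra hdet
  have hrank := rank_of_isUnit _ ((isUnit_iff_isUnit_det _).2 (Ne.isUnit hdet))
  rw [Fintype.card_fin] at hrank
  have := hrank.symm.le.trans ((rank_mul_le_left _ _).trans (rank_le_width _))
  omega

theorem kwong_singular_iff_general {n : ℕ} (p : Fin n → ℝ)
    (hpos : ∀ i, 0 < p i) (hmono : StrictMono p) (r : ℝ) (hr : 0 < r) :
    (kwong p r).det = 0 ↔ ∃ k : ℕ, Odd k ∧ r = (k : ℝ) ∧ k < n := by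
  refine ⟨fun hdet => ?_, ?_⟩
  · by_contra hr_odd
    exact kwong_det_ne_zero hpos hmono hr hr_odd hdet
  · rintro ⟨k, hk, rfl, hkn⟩
    exact kwong_natCast_det_eq_zero hpos hk hkn

/-- For `0 < n`, distinct positive reals `p 0 < p 1 < ⋯` and `r > 0`,
the Kwong matrix `K_r` is singular iff `r` is an odd integer with `r < n`. -/
theorem kwong_singular_iff {n : ℕ} (hn : 0 < n) (p : Fin n → ℝ)
    (hpos : ∀ i, 0 < p i) (hmono : StrictMono p) (r : ℝ) (hr : 0 < r) :
    (kwong p r).det = 0 ↔ ∃ k : ℕ, Odd k ∧ r = (k : ℝ) ∧ k < n :=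
  kwong_singular_iff_general p hpos hmono r hr
end

section
/- Let p_1 < p_2 < ... < p_n be distinct positive real numbers and let r be an odd positive integer with r ≤ n. Then the inertia of the Kwong matrix K_r(p_1,...,p_n) equals (⌈r/2⌉, n−r, ⌊r/2⌋) if r ≡ 1 (mod 4), and equals (⌊r/2⌋, n−r, ⌈r/2⌉) if r ≡ 3 (mod 4). -/
/-!
Write `r = 2m+1`. Summing the geometric series, `K_r i j = ∑ₖ (-1)ᵏ (p i)ᵏ (p j)^(2m-k)`, so
`xᵀ K_r x = ∑ₖ (-1)ᵏ yₖ y₂ₘ₋ₖ` where `yₖ = ∑ᵢ (p i)ᵏ xᵢ` are the moments of `x`. Pairing `k` with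
`2m-k` splits this form into `m` hyperbolic planes and the term `(-1)ᵐ yₘ²`, a diagonal form with
`m + [m even]` positive and `m + [m odd]` negative coefficients. Since `p` is injective and
`r ≤ n`, the moment map `ℝⁿ → ℝʳ` is onto (a Vandermonde minor is invertible), so Sylvester's law
of inertia, comparing this diagonalization with the spectral one, gives the eigenvalue counts.
-/

open Matrix

section Sylvester

theorem finrank_set_fun_eq_ncard {α : Type*} [Finite α] (s : Set α) :
    Module.finrank ℝ (s → ℝ) = s.ncard := by
  have := Fintype.ofFinite s
  rw [Module.finrank_fintype_fun_eq_card, ← Nat.card_eq_fintype_card, Nat.card_coe_set_eq]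

variable {V ι : Type*} [AddCommGroup V] [Module ℝ V] [Fintype ι]

theorem exists_linearMap_pos_of_sum_sq {Q : V → ℝ} {L : V →ₗ[ℝ] ι → ℝ}
    (hL : Function.Surjective L) {d : ι → ℝ} (hQ : ∀ x, Q x = ∑ i, d i * L x i ^ 2) :
    ∃ T : ({i | 0 < d i} → ℝ) →ₗ[ℝ] V, ∀ c ≠ 0, 0 < Q (T c) := by
  obtain ⟨R, hR⟩ := L.exists_rightInverse_of_surjective (LinearMap.range_eq_top.2 hL)
  refine ⟨R ∘ₗ Function.ExtendByZero.linearMap ℝ Subtype.val, fun c hc => ?_⟩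
  obtain ⟨j, hj⟩ := Function.ne_iff.1 hc
  set y := Function.extend Subtype.val c 0
  have hy : ∀ i : {i | 0 < d i}, y i = c i := Subtype.val_injective.extend_apply c 0
  have hterm : ∀ i, 0 ≤ d i * y i ^ 2 := by
    intro i
    by_cases hi : 0 < d i
    · positivity
    · have : y i = 0 := Function.extend_apply' _ _ _ fun ⟨a, ha⟩ => hi (ha ▸ a.2)
      simp [this]
  rw [hQ, LinearMap.comp_apply, ← LinearMap.comp_apply L, hR, LinearMap.id_apply]
  calc 0 < d j * y j ^ 2 := by rw [hy]; exact mul_pos j.2 (sq_pos_of_ne_zero hj)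
    _ ≤ ∑ i, d i * y i ^ 2 := Finset.single_le_sum (fun i _ => hterm i) (Finset.mem_univ _)

theorem finrank_le_ncard_pos_of_sum_sq {E : Type*} [AddCommGroup E] [Module ℝ E]
    [FiniteDimensional ℝ E] {Q : V → ℝ} (L : V →ₗ[ℝ] ι → ℝ) {d : ι → ℝ}
    (hQ : ∀ x, Q x = ∑ i, d i * L x i ^ 2) (T : E →ₗ[ℝ] V) (hT : ∀ c ≠ 0, 0 < Q (T c)) :
    Module.finrank ℝ E ≤ {i | 0 < d i}.ncard := by
  classical
  let Φ := LinearMap.funLeft ℝ ℝ (Subtype.val : {i | 0 < d i} → ι) ∘ₗ L ∘ₗ T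
  have hΦ : Function.Injective Φ := by
    rw [← LinearMap.ker_eq_bot, LinearMap.ker_eq_bot']
    intro c hc
    by_contra hc0
    have hterm : ∀ i, d i * L (T c) i ^ 2 ≤ 0 := by
      intro i
      by_cases hi : 0 < d i
      · have : L (T c) i = 0 := congr_fun hc ⟨i, hi⟩
        simp [this]
      · exact mul_nonpos_of_nonpos_of_nonneg (not_lt.1 hi) (sq_nonneg _)
    have := hT c hc0
    rw [hQ] at this
    linarith [Finset.sum_nonpos fun i (_ : i ∈ Finset.univ) => hterm i]
  calc Module.finrank ℝ E ≤ Module.finrank ℝ ({i | 0 < d i} → ℝ) :=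
        LinearMap.finrank_le_finrank_of_injective hΦ
    _ = {i | 0 < d i}.ncard := finrank_set_fun_eq_ncard _

variable {κ : Type*} [Fintype κ]

theorem ncard_pos_eq_of_sum_sq {Q : V → ℝ} {L : V →ₗ[ℝ] ι → ℝ} {M : V →ₗ[ℝ] κ → ℝ}
    (hL : Function.Surjective L) (hM : Function.Surjective M) {d : ι → ℝ} {e : κ → ℝ}
    (hQL : ∀ x, Q x = ∑ i, d i * L x i ^ 2) (hQM : ∀ x, Q x = ∑ j, e j * M x j ^ 2) :
    {i | 0 < d i}.ncard = {j | 0 < e j}.ncard := by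
  obtain ⟨T, hT⟩ := exists_linearMap_pos_of_sum_sq hL hQL
  obtain ⟨T', hT'⟩ := exists_linearMap_pos_of_sum_sq hM hQM
  refine le_antisymm ?_ ?_
  · rw [← finrank_set_fun_eq_ncard]; exact finrank_le_ncard_pos_of_sum_sq M hQM T hT
  · rw [← finrank_set_fun_eq_ncard]; exact finrank_le_ncard_pos_of_sum_sq L hQL T' hT'

theorem ncard_neg_eq_of_sum_sq {Q : V → ℝ} {L : V →ₗ[ℝ] ι → ℝ} {M : V →ₗ[ℝ] κ → ℝ}
    (hL : Function.Surjective L) (hM : Function.Surjective M) {d : ι → ℝ} {e : κ → ℝ}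
    (hQL : ∀ x, Q x = ∑ i, d i * L x i ^ 2) (hQM : ∀ x, Q x = ∑ j, e j * M x j ^ 2) :
    {i | d i < 0}.ncard = {j | e j < 0}.ncard := by
  have := ncard_pos_eq_of_sum_sq (Q := -Q) (d := -d) (e := -e) hL hM
    (by simp [hQL, neg_mul]) (by simp [hQM, neg_mul])
  simpa using this

end Sylvester

theorem Matrix.IsHermitian.dotProduct_mulVec_eq_sum_eigenvalues_mul_sq {n : Type*} [Fintype n]
    [DecidableEq n] {A : Matrix n n ℝ} (hA : A.IsHermitian) (x : n → ℝ) :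
    x ⬝ᵥ A *ᵥ x = ∑ i, hA.eigenvalues i *
      (star (hA.eigenvectorUnitary : Matrix n n ℝ) *ᵥ x) i ^ 2 := by
  set U : Matrix n n ℝ := (hA.eigenvectorUnitary : Matrix n n ℝ)
  conv_lhs => rw [hA.spectral_theorem, Unitary.conjStarAlgAut_apply]
  have hstar : star U = Uᵀ := rfl
  rw [← mulVec_mulVec, ← mulVec_mulVec, dotProduct_mulVec x U, hstar, ← mulVec_transpose]
  simp [dotProduct, mulVec_diagonal, sq, mul_left_comm]

theorem Matrix.IsHermitian.star_eigenvectorUnitary_mulVec_surjective {n : Type*} [Fintype n]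
    [DecidableEq n] {A : Matrix n n ℝ} (hA : A.IsHermitian) :
    Function.Surjective (star (hA.eigenvectorUnitary : Matrix n n ℝ)).mulVecLin := fun y =>
  ⟨(hA.eigenvectorUnitary : Matrix n n ℝ) *ᵥ y, by
    simp [mulVec_mulVec, Unitary.star_mul_self_of_mem hA.eigenvectorUnitary.2]⟩

theorem ncard_setOf_eq_zero {α : Type*} [Finite α] (f : α → ℝ) :
    {a | f a = 0}.ncard = Nat.card α - {a | 0 < f a}.ncard - {a | f a < 0}.ncard := by
  have hdisj : Disjoint {a | 0 < f a} {a | f a < 0} :=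
    Set.disjoint_left.2 fun a (h1 : 0 < f a) (h2 : f a < 0) => (lt_asymm h1 h2).elim
  have hcompl : {a | f a = 0} = ({a | 0 < f a} ∪ {a | f a < 0})ᶜ := by
    ext a; simp [le_antisymm_iff]
  rw [hcompl, Set.ncard_compl, Set.ncard_union_eq hdisj]
  omega

theorem inertia_eq_of_sum_sq {n : ℕ} {ι : Type*} [Fintype ι] {A : Matrix (Fin n) (Fin n) ℝ}
    (hA : A.IsHermitian) {L : (Fin n → ℝ) →ₗ[ℝ] ι → ℝ} (hL : Function.Surjective L)
    {d : ι → ℝ} (hAL : ∀ x, x ⬝ᵥ A *ᵥ x = ∑ i, d i * L x i ^ 2) :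
    inertia A hA =
      ({i | 0 < d i}.ncard, n - {i | 0 < d i}.ncard - {i | d i < 0}.ncard, {i | d i < 0}.ncard) := by
  have hev := hA.dotProduct_mulVec_eq_sum_eigenvalues_mul_sq
  have hpos := ncard_pos_eq_of_sum_sq hA.star_eigenvectorUnitary_mulVec_surjective hL hev hAL
  have hneg := ncard_neg_eq_of_sum_sq hA.star_eigenvectorUnitary_mulVec_surjective hL hev hAL
  rw [inertia, ncard_setOf_eq_zero, Nat.card_eq_fintype_card, Fintype.card_fin, hpos, hneg]

section Antidiagonal

variable (m : ℕ)

def antidiagSign (k : Fin (2 * m + 1)) : ℝ :=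
  if (k : ℕ) < m then (-1) ^ (k : ℕ) else if m < (k : ℕ) then -(-1) ^ (k : ℕ) else 0

def antidiagCoord : (Fin (2 * m + 1) → ℝ) →ₗ[ℝ] Fin (2 * m + 1) → ℝ :=
  LinearMap.pi fun k => LinearMap.proj k + antidiagSign m k • LinearMap.proj k.rev

/-- With `ε = (-1) ^ k`, `½ (y k + ε y (2m-k))² - ½ (y (2m-k) - ε y k)² = 2 ε y k y (2m-k)`. -/
noncomputable def antidiagWeight (k : Fin (2 * m + 1)) : ℝ :=
  if (k : ℕ) < m then 1 / 2 else if m < (k : ℕ) then -1 / 2 else (-1) ^ m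

theorem antidiagCoord_apply (y : Fin (2 * m + 1) → ℝ) (k : Fin (2 * m + 1)) :
    antidiagCoord m y k = y k + antidiagSign m k * y k.rev := rfl

variable {m}

theorem neg_one_pow_rev (k : Fin (2 * m + 1)) : (-1 : ℝ) ^ (k.rev : ℕ) = (-1) ^ (k : ℕ) := by
  rw [neg_one_pow_eq_pow_mod_two, neg_one_pow_eq_pow_mod_two (n := (k : ℕ)), Fin.val_rev]
  congr 1
  omega

theorem sum_eq_sum_of_add_rev_eq {f g : Fin (2 * m + 1) → ℝ}
    (h : ∀ k : Fin (2 * m + 1), (k : ℕ) ≤ m → f k + f k.rev = g k + g k.rev) :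
    ∑ k, f k = ∑ k, g k := by
  have hrev (u : Fin (2 * m + 1) → ℝ) : 2 * ∑ k, u k = ∑ k, (u k + u k.rev) := by
    rw [Finset.sum_add_distrib, two_mul, ← Equiv.sum_comp Fin.revPerm u]
    rfl
  have hall : ∀ k, f k + f k.rev = g k + g k.rev := by
    intro k
    by_cases hk : (k : ℕ) ≤ m
    · exact h k hk
    · have := h k.rev (by rw [Fin.val_rev]; omega)
      rw [Fin.rev_rev] at this
      linarith
  linarith [hrev f, hrev g, Finset.sum_congr rfl fun k (_ : k ∈ Finset.univ) => hall k]

theorem sum_neg_one_pow_mul_rev_eq (y : Fin (2 * m + 1) → ℝ) :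
    ∑ k : Fin (2 * m + 1), (-1) ^ (k : ℕ) * y k * y k.rev =
      ∑ k, antidiagWeight m k * antidiagCoord m y k ^ 2 := by
  refine sum_eq_sum_of_add_rev_eq fun k hk => ?_
  simp only [antidiagCoord_apply, antidiagWeight, antidiagSign, Fin.rev_rev, neg_one_pow_rev]
  rcases hk.lt_or_eq with hk | hk
  · have hrev : m < (k.rev : ℕ) := by rw [Fin.val_rev]; omega
    have hsq : ((-1 : ℝ) ^ (k : ℕ)) ^ 2 = 1 := by rw [← pow_mul, mul_comm, pow_mul]; norm_num
    simp only [if_pos hk, if_neg hrev.not_gt, if_pos hrev]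
    generalize (-1 : ℝ) ^ (k : ℕ) = ε at hsq ⊢
    linear_combination (1 / 2 * (y k ^ 2 - y k.rev ^ 2)) * hsq
  · have hrev : k.rev = k := Fin.ext (by rw [Fin.val_rev]; omega)
    simp only [hrev, hk, lt_irrefl, if_false]
    ring

theorem antidiagCoord_surjective : Function.Surjective (antidiagCoord m) := by
  refine LinearMap.injective_iff_surjective.1 ?_
  rw [← LinearMap.ker_eq_bot, LinearMap.ker_eq_bot']
  intro y hy
  have hlow : ∀ k : Fin (2 * m + 1), (k : ℕ) < m → y k = 0 ∧ y k.rev = 0 := by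
    intro k hk
    have hrev : m < (k.rev : ℕ) := by rw [Fin.val_rev]; omega
    have h1 := congr_fun hy k
    have h2 := congr_fun hy k.rev
    simp only [antidiagCoord_apply, antidiagSign, Fin.rev_rev, neg_one_pow_rev,
      Pi.zero_apply, if_pos hk, if_neg hrev.not_gt, if_pos hrev] at h1 h2
    have hsq : ((-1 : ℝ) ^ (k : ℕ)) ^ 2 = 1 := by rw [← pow_mul, mul_comm, pow_mul]; norm_num
    generalize (-1 : ℝ) ^ (k : ℕ) = ε at hsq h1 h2
    constructor
    · linear_combination (1 / 2) * h1 - ε / 2 * h2 - y k / 2 * hsq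
    · linear_combination ε / 2 * h1 + (1 / 2) * h2 - y k.rev / 2 * hsq
  funext k
  rcases lt_trichotomy (k : ℕ) m with hk | hk | hk
  · exact (hlow k hk).1
  · simpa [antidiagCoord_apply, antidiagSign, hk] using congr_fun hy k
  · simpa using (hlow k.rev (by rw [Fin.val_rev]; omega)).2

theorem ncard_antidiagWeight_pos :
    {k | 0 < antidiagWeight m k}.ncard = if Even m then m + 1 else m := by
  split_ifs with hm
  · have : {k | 0 < antidiagWeight m k} = Set.Iic ⟨m, by omega⟩ := by
      ext k
      rw [Set.mem_Iic, Fin.le_def, Set.mem_ofPred, antidiagWeight]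
      split_ifs <;> norm_num [hm.neg_one_pow] <;> omega
    rw [this, ← Finset.coe_Iic, Set.ncard_coe_finset, Fin.card_Iic]
  · have : {k | 0 < antidiagWeight m k} = Set.Iio ⟨m, by omega⟩ := by
      ext k
      rw [Set.mem_Iio, Fin.lt_def, Set.mem_ofPred, antidiagWeight]
      split_ifs <;> norm_num [(Nat.not_even_iff_odd.1 hm).neg_one_pow] <;> omega
    rw [this, ← Finset.coe_Iio, Set.ncard_coe_finset, Fin.card_Iio]

theorem ncard_antidiagWeight_neg :
    {k | antidiagWeight m k < 0}.ncard = if Even m then m else m + 1 := by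
  split_ifs with hm
  · have : {k | antidiagWeight m k < 0} = Set.Ioi ⟨m, by omega⟩ := by
      ext k
      rw [Set.mem_Ioi, Fin.lt_def, Set.mem_ofPred, antidiagWeight]
      split_ifs <;> norm_num [hm.neg_one_pow] <;> omega
    rw [this, ← Finset.coe_Ioi, Set.ncard_coe_finset, Fin.card_Ioi, Fin.val_mk]
    omega
  · have : {k | antidiagWeight m k < 0} = Set.Ici ⟨m, by omega⟩ := by
      ext k
      rw [Set.mem_Ici, Fin.le_def, Set.mem_ofPred, antidiagWeight]
      split_ifs <;> norm_num [(Nat.not_even_iff_odd.1 hm).neg_one_pow] <;> omega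
    rw [this, ← Finset.coe_Ici, Set.ncard_coe_finset, Fin.card_Ici, Fin.val_mk]
    omega

end Antidiagonal

theorem kwong_odd_apply {n : ℕ} (p : Fin n → ℝ) (m : ℕ) {i j : Fin n} (hij : p i + p j ≠ 0) :
    kwong p ((2 * m + 1 : ℕ) : ℝ) i j =
      ∑ k : Fin (2 * m + 1), (-1) ^ (k : ℕ) * p i ^ (k : ℕ) * p j ^ (k.rev : ℕ) := by
  have hgeom := geom_sum₂_mul (-p i) (p j) (2 * m + 1)
  rw [Odd.neg_pow ⟨m, rfl⟩, ← Fin.sum_univ_eq_sum_range] at hgeom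
  have hterm : ∀ k : Fin (2 * m + 1), (-p i) ^ (k : ℕ) * p j ^ (2 * m + 1 - 1 - k) =
      (-1) ^ (k : ℕ) * p i ^ (k : ℕ) * p j ^ (k.rev : ℕ) := by
    intro k
    rw [neg_pow, Fin.val_rev, show 2 * m + 1 - 1 - (k : ℕ) = 2 * m + 1 - (k + 1) by omega]
  simp only [hterm] at hgeom
  rw [kwong, of_apply, Real.rpow_natCast, Real.rpow_natCast, div_eq_iff hij]
  linear_combination hgeom

def momentMap {n : ℕ} (p : Fin n → ℝ) (N : ℕ) : (Fin n → ℝ) →ₗ[ℝ] Fin N → ℝ :=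
  (of fun (k : Fin N) (i : Fin n) => p i ^ (k : ℕ)).mulVecLin

theorem momentMap_apply {n : ℕ} (p : Fin n → ℝ) (N : ℕ) (x : Fin n → ℝ) (k : Fin N) :
    momentMap p N x k = ∑ i, p i ^ (k : ℕ) * x i := rfl

theorem momentMap_surjective {n N : ℕ} {p : Fin n → ℝ} (hp : Function.Injective p)
    (hN : N ≤ n) : Function.Surjective (momentMap p N) := by
  set A : Matrix (Fin N) (Fin n) ℝ := of fun k i => p i ^ (k : ℕ)
  have hV : IsUnit (vandermonde (p ∘ Fin.castLE hN))ᵀ := by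
    rw [isUnit_iff_isUnit_det, det_transpose, isUnit_iff_ne_zero, det_vandermonde_ne_zero_iff]
    exact hp.comp (Fin.castLE_injective hN)
  have hrank : A.rank = N := by
    refine le_antisymm A.rank_le_height ?_
    calc N = (vandermonde (p ∘ Fin.castLE hN))ᵀ.rank := by simp [rank_of_isUnit _ hV]
      _ = (A.submatrix id (Fin.castLE hN)).rank := rfl
      _ ≤ A.rank := rank_submatrix_le A id _
  rw [← LinearMap.range_eq_top]
  apply Submodule.eq_top_of_finrank_eq
  rw [Module.finrank_fin_fun]
  exact hrank

theorem dotProduct_kwong_mulVec {n : ℕ} {p : Fin n → ℝ} (hp : ∀ i j, p i + p j ≠ 0) (m : ℕ)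
    (x : Fin n → ℝ) :
    x ⬝ᵥ kwong p ((2 * m + 1 : ℕ) : ℝ) *ᵥ x = ∑ k : Fin (2 * m + 1),
      (-1) ^ (k : ℕ) * momentMap p (2 * m + 1) x k * momentMap p (2 * m + 1) x k.rev := by
  simp only [dotProduct, mulVec, kwong_odd_apply p m (hp _ _), momentMap_apply, Finset.mul_sum,
    Finset.sum_mul]
  calc _ = ∑ a, ∑ k : Fin (2 * m + 1), ∑ b,
        x a * ((-1) ^ (k : ℕ) * p a ^ (k : ℕ) * p b ^ (k.rev : ℕ) * x b) :=
        Finset.sum_congr rfl fun a _ => Finset.sum_comm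
    _ = _ := by
      rw [Finset.sum_comm]
      refine Finset.sum_congr rfl fun k _ => ?_
      rw [Finset.sum_comm]
      exact Finset.sum_congr rfl fun _ _ => Finset.sum_congr rfl fun _ _ => by ring

theorem inertia_kwong_odd {n : ℕ} {p : Fin n → ℝ} (hp : ∀ i j, p i + p j ≠ 0)
    (hinj : Function.Injective p) {m : ℕ} (hmn : 2 * m + 1 ≤ n) :
    inertia (kwong p ((2 * m + 1 : ℕ) : ℝ)) (kwong_isHermitian _ _) =
      (if Even m then m + 1 else m, n - (2 * m + 1), if Even m then m else m + 1) := by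
  have hL : Function.Surjective (antidiagCoord m ∘ₗ momentMap p (2 * m + 1)) := by
    rw [LinearMap.coe_comp]
    exact antidiagCoord_surjective.comp (momentMap_surjective hinj hmn)
  rw [inertia_eq_of_sum_sq _ hL fun x =>
      (dotProduct_kwong_mulVec hp m x).trans (sum_neg_one_pow_mul_rev_eq _),
    ncard_antidiagWeight_pos, ncard_antidiagWeight_neg]
  split_ifs <;> simp only [Prod.mk.injEq, true_and, and_true] <;> omega

theorem inertia_kwong_odd_integer_general {n : ℕ} (p : Fin n → ℝ)
    (hpos : ∀ i, 0 < p i) (hmono : StrictMono p) (r : ℕ) (hodd : Odd r)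
    (hrn : r ≤ n) :
    (r % 4 = 1 → inertia (kwong p (r : ℝ)) (kwong_isHermitian p (r : ℝ)) =
      ((r + 1) / 2, n - r, r / 2)) ∧
    (r % 4 = 3 → inertia (kwong p (r : ℝ)) (kwong_isHermitian p (r : ℝ)) =
      (r / 2, n - r, (r + 1) / 2)) := by
  obtain ⟨m, rfl⟩ := hodd
  rw [inertia_kwong_odd (fun i j => (add_pos (hpos i) (hpos j)).ne') hmono.injective hrn]
  refine ⟨fun hr => ?_, fun hr => ?_⟩
  · have hm : Even m := Nat.even_iff.2 (by omega)
    simp only [hm, if_true, Prod.mk.injEq, true_and]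
    omega
  · have hm : ¬Even m := by rw [Nat.not_even_iff_odd, Nat.odd_iff]; omega
    simp only [hm, if_false, Prod.mk.injEq, true_and]
    omega

/-- For `p 0 < p 1 < ⋯ < p (n-1)` positive and `r` an odd positive
integer with `r ≤ n`, the inertia of `K_r` is `(⌈r/2⌉, n - r, ⌊r/2⌋)` if
`r ≡ 1 (mod 4)` and `(⌊r/2⌋, n - r, ⌈r/2⌉)` if `r ≡ 3 (mod 4)`. -/
theorem inertia_kwong_odd_integer {n : ℕ} (p : Fin n → ℝ)
    (hpos : ∀ i, 0 < p i) (hmono : StrictMono p) (r : ℕ) (hodd : Odd r) (hr0 : 0 < r)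
    (hrn : r ≤ n) :
    (r % 4 = 1 → inertia (kwong p (r : ℝ)) (kwong_isHermitian p (r : ℝ)) =
      ((r + 1) / 2, n - r, r / 2)) ∧
    (r % 4 = 3 → inertia (kwong p (r : ℝ)) (kwong_isHermitian p (r : ℝ)) =
      (r / 2, n - r, (r + 1) / 2)) :=
  inertia_kwong_odd_integer_general p hpos hmono r hodd hrn
end

section
/- Let x_1, ..., x_n be distinct real numbers, let r be a real number, and set p_i = e^{2 x_i} for each i. Then K_r(p_1,...,p_n) = Δ K̃_r Δ, where Δ = diag(e^{(r−1)x_1}, ..., e^{(r−1)x_n}) and K̃_r is the n×n matrix with (i,j) entry cosh(r(x_i−x_j))/cosh(x_i−x_j); consequently the inertia of K_r(p_1,...,p_n) equals the inertia of K̃_r. -/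
/-!
With `p i = exp (2 * x i)` one has `p i ^ r + p j ^ r = 2 e^{r(x i + x j)} cosh (r (x i - x j))`,
and dividing by the case `r = 1` gives the factorization `Kᵣ = Δ K̃ᵣ Δ` entrywise.
The inertia statement is Sylvester's law of inertia for the congruence by the invertible `Δ`:
by the spectral theorem the three eigenvalue counts of a real symmetric matrix are the positive
index, the radical dimension and the negative index of its quadratic form, and these are
invariant under an invertible change of variables.
-/

open Matrix

lemma coshRatio_isHermitian {n : ℕ} (x : Fin n → ℝ) (r : ℝ) :
    (Matrix.of fun i j : Fin n =>
      Real.cosh (r * (x i - x j)) / Real.cosh (x i - x j)).IsHermitian := by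
  ext i j
  simp only [Matrix.conjTranspose_apply, Matrix.of_apply, star_trivial]
  rw [show x j - x i = -(x i - x j) by ring, show r * -(x i - x j) = -(r * (x i - x j)) by
    ring, Real.cosh_neg, Real.cosh_neg]

namespace Matrix

open QuadraticMap

variable {R n : Type*} [CommRing R] [Fintype n] [DecidableEq n]

theorem toQuadraticForm'_apply (A : Matrix n n R) (x : n → R) :
    A.toQuadraticForm' x = x ⬝ᵥ A *ᵥ x := by
  simp [toQuadraticForm', toLinearMap₂'_apply']

theorem toQuadraticForm'_comp_toLin' (A C : Matrix n n R) :
    A.toQuadraticForm'.comp (toLin' C) = (Cᵀ * A * C).toQuadraticForm' := by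
  ext x
  rw [QuadraticMap.comp_apply, toLin'_apply, toQuadraticForm'_apply, toQuadraticForm'_apply,
    ← mulVec_mulVec, ← mulVec_mulVec, dotProduct_mulVec x Cᵀ, vecMul_transpose]

theorem toQuadraticForm'_diagonal (w : n → R) :
    (diagonal w).toQuadraticForm' = weightedSumSquares R w := by
  ext x
  simp [toQuadraticForm'_apply, dotProduct, mulVec_diagonal, mul_left_comm]

theorem equivalent_toQuadraticForm'_transpose_mul_mul (A : Matrix n n R) {C : Matrix n n R}
    (hC : IsUnit C.det) : A.toQuadraticForm'.Equivalent (Cᵀ * A * C).toQuadraticForm' := by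
  rw [← toQuadraticForm'_comp_toLin']
  exact ⟨isometryEquivOfCompLinearEquiv _ (C.toLinearEquiv' (C.invertibleOfIsUnitDet hC))⟩

theorem IsHermitian.equivalent_weightedSumSquares {A : Matrix n n ℝ} (hA : A.IsHermitian) :
    A.toQuadraticForm'.Equivalent (weightedSumSquares ℝ hA.eigenvalues) := by
  set U : Matrix n n ℝ := ↑hA.eigenvectorUnitary
  have hU : IsUnit U.det := isUnit_det_of_left_inverse (Unitary.coe_star_mul_self _)
  have h := hA.conjStarAlgAut_star_eigenvectorUnitary
  rw [Unitary.conjStarAlgAut_star_apply, star_eq_conjTranspose,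
    conjTranspose_eq_transpose_of_trivial, RCLike.ofReal_real_eq_id, Function.id_comp] at h
  rw [← toQuadraticForm'_diagonal, ← h]
  exact equivalent_toQuadraticForm'_transpose_mul_mul A hU

end Matrix

open QuadraticForm in
theorem inertia_eq_signature {n : ℕ} {A : Matrix (Fin n) (Fin n) ℝ} (hA : A.IsHermitian) :
    inertia A hA = (sigPos A.toQuadraticForm', Module.finrank ℝ A.toQuadraticForm'.radical,
      sigNeg A.toQuadraticForm') := by
  have h := hA.equivalent_weightedSumSquares
  rw [sigPos_of_equiv_weightedSumSquares h, finrank_radical_of_equiv_weightedSumSquares h,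
    sigNeg_of_equiv_weightedSumSquares h, inertia]

theorem inertia_eq_of_eq_transpose_mul_mul {n : ℕ} {A B C : Matrix (Fin n) (Fin n) ℝ}
    (hA : A.IsHermitian) (hB : B.IsHermitian) (hC : IsUnit C.det) (h : B = Cᵀ * A * C) :
    inertia B hB = inertia A hA := by
  have e := (A.equivalent_toQuadraticForm'_transpose_mul_mul hC).symm
  rw [← h] at e
  rw [inertia_eq_signature, inertia_eq_signature, e.sigPos_eq, e.rank_radical_eq, e.sigNeg_eq]

open Real

theorem rpow_exp_two_mul_add (r a b : ℝ) :
    exp (2 * a) ^ r + exp (2 * b) ^ r = 2 * exp (r * (a + b)) * cosh (r * (a - b)) := by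
  rw [← exp_mul, ← exp_mul, cosh_eq]
  field_simp
  rw [mul_add, ← exp_add, ← exp_add]
  ring_nf

theorem rpow_exp_two_mul_add_div (r a b : ℝ) :
    (exp (2 * a) ^ r + exp (2 * b) ^ r) / (exp (2 * a) + exp (2 * b)) =
      exp ((r - 1) * a) * (cosh (r * (a - b)) / cosh (a - b)) * exp ((r - 1) * b) := by
  have h1 := rpow_exp_two_mul_add 1 a b
  simp only [rpow_one, one_mul] at h1
  rw [rpow_exp_two_mul_add, h1]
  have hsplit : exp (r * (a + b)) = exp ((r - 1) * a) * exp ((r - 1) * b) * exp (a + b) := by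
    rw [← exp_add, ← exp_add]; ring_nf
  rw [hsplit]
  field_simp

theorem kwong_exp_two_mul {n : ℕ} (x : Fin n → ℝ) (r : ℝ) :
    kwong (fun i => exp (2 * x i)) r =
      diagonal (fun i => exp ((r - 1) * x i)) *
        of (fun i j => cosh (r * (x i - x j)) / cosh (x i - x j)) *
        diagonal (fun i => exp ((r - 1) * x i)) := by
  ext i j
  rw [mul_diagonal, diagonal_mul]
  exact rpow_exp_two_mul_add_div r (x i) (x j)

theorem kwong_cosh_congruence_general {n : ℕ} (x : Fin n → ℝ)
    (r : ℝ) (p : Fin n → ℝ) (hp : ∀ i, p i = Real.exp (2 * x i)) :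
    kwong p r =
      Matrix.diagonal (fun i => Real.exp ((r - 1) * x i)) *
        (Matrix.of fun i j : Fin n =>
          Real.cosh (r * (x i - x j)) / Real.cosh (x i - x j)) *
        Matrix.diagonal (fun i => Real.exp ((r - 1) * x i)) ∧
    inertia (kwong p r) (kwong_isHermitian p r) =
      inertia (Matrix.of fun i j : Fin n =>
          Real.cosh (r * (x i - x j)) / Real.cosh (x i - x j))
        (coshRatio_isHermitian x r) := by
  obtain rfl : p = fun i => exp (2 * x i) := funext hp
  have hΔ : IsUnit (diagonal fun i => exp ((r - 1) * x i)).det := by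
    rw [det_diagonal]
    exact isUnit_iff_ne_zero.mpr (by positivity)
  refine ⟨kwong_exp_two_mul x r, inertia_eq_of_eq_transpose_mul_mul _ _ hΔ ?_⟩
  rw [diagonal_transpose, kwong_exp_two_mul]

/-- with `p i = exp (2 x i)`, one has `Kᵣ = Δ K̃ᵣ Δ` where
`Δ = diag(e^{(r-1)x i})` and `K̃ᵣ = [cosh r(x i - x j) / cosh (x i - x j)]`;
consequently `In Kᵣ = In K̃ᵣ`. -/
theorem kwong_cosh_congruence {n : ℕ} (x : Fin n → ℝ) (hx : Function.Injective x)
    (r : ℝ) (p : Fin n → ℝ) (hp : ∀ i, p i = Real.exp (2 * x i)) :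
    kwong p r =
      Matrix.diagonal (fun i => Real.exp ((r - 1) * x i)) *
        (Matrix.of fun i j : Fin n =>
          Real.cosh (r * (x i - x j)) / Real.cosh (x i - x j)) *
        Matrix.diagonal (fun i => Real.exp ((r - 1) * x i)) ∧
    inertia (kwong p r) (kwong_isHermitian p r) =
      inertia (Matrix.of fun i j : Fin n =>
          Real.cosh (r * (x i - x j)) / Real.cosh (x i - x j))
        (coshRatio_isHermitian x r) :=
  kwong_cosh_congruence_general x r p hp
end

section
/- Let p_1 < p_2 be distinct positive real numbers and r a positive real number. Then the inertia of the 2×2 Kwong matrix K_r(p_1,p_2) equals (2,0,0) if 0 < r < 1, equals (1,1,0) if r = 1, and equals (1,0,1) if r > 1. -/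
/-!
The diagonal entries of `K_r(p₀, p₁)` are `pᵢ ^ (r - 1)`, so the trace is positive, and with
`x = p₀ ^ (r - 1)`, `y = p₁ ^ (r - 1)` one finds
`det K_r = (x - y) (p₁ ^ (r + 1) - p₀ ^ (r + 1)) / (p₀ + p₁) ^ 2`.
For `p₀ < p₁` the second factor is positive, so `det K_r` has the sign of `1 - r`. For a
symmetric `2 × 2` matrix with positive trace, the sign of the determinant (the product of
the two eigenvalues) decides the inertia.
-/

open Matrix

lemma Set.ncard_setOf_fin_two (P : Fin 2 → Prop) [DecidablePred P] :
    {i | P i}.ncard = (if P 0 then 1 else 0) + (if P 1 then 1 else 0) := by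
  rw [Set.ncard_eq_toFinset_card', Set.toFinset_ofPred, Finset.card_filter, Fin.sum_univ_two]

namespace Matrix.IsHermitian

variable {A : Matrix (Fin 2) (Fin 2) ℝ} (hA : A.IsHermitian)

lemma eigenvalues_zero_mul_eigenvalues_one : hA.eigenvalues 0 * hA.eigenvalues 1 = A.det := by
  simp [hA.det_eq_prod_eigenvalues, Fin.prod_univ_two]

lemma eigenvalues_zero_add_eigenvalues_one : hA.eigenvalues 0 + hA.eigenvalues 1 = A.trace := by
  simp [hA.trace_eq_sum_eigenvalues, Fin.sum_univ_two]

lemma inertia_eq_of_det_pos (hd : 0 < A.det) (ht : 0 < A.trace) :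
    inertia A hA = (2, 0, 0) := by
  have hmul := hA.eigenvalues_zero_mul_eigenvalues_one
  have hadd := hA.eigenvalues_zero_add_eigenvalues_one
  have h0 : 0 < hA.eigenvalues 0 := by nlinarith
  have h1 : 0 < hA.eigenvalues 1 := by nlinarith
  simp [inertia, Set.ncard_setOf_fin_two, h0, h1, h0.ne', h1.ne', h0.not_gt, h1.not_gt]

lemma inertia_eq_of_det_eq_zero (hd : A.det = 0) (ht : 0 < A.trace) :
    inertia A hA = (1, 1, 0) := by
  have hmul := hA.eigenvalues_zero_mul_eigenvalues_one
  have hadd := hA.eigenvalues_zero_add_eigenvalues_one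
  rcases mul_eq_zero.mp (hmul.trans hd) with h0 | h1
  · have h1 : 0 < hA.eigenvalues 1 := by linarith
    simp [inertia, Set.ncard_setOf_fin_two, h0, h1, h1.ne', h1.not_gt]
  · have h0 : 0 < hA.eigenvalues 0 := by linarith
    simp [inertia, Set.ncard_setOf_fin_two, h0, h1, h0.ne', h0.not_gt]

lemma inertia_eq_of_det_neg (hd : A.det < 0) : inertia A hA = (1, 0, 1) := by
  have hmul := hA.eigenvalues_zero_mul_eigenvalues_one
  rcases mul_neg_iff.mp (hmul ▸ hd) with ⟨h0, h1⟩ | ⟨h0, h1⟩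
  · simp [inertia, Set.ncard_setOf_fin_two, h0, h1, h0.ne', h1.ne, h0.not_gt, h1.not_gt]
  · simp [inertia, Set.ncard_setOf_fin_two, h0, h1, h0.ne, h1.ne', h0.not_gt, h1.not_gt]

end Matrix.IsHermitian

lemma kwong_apply_self {n : ℕ} {p : Fin n → ℝ} {i : Fin n} (hp : p i ≠ 0) (r : ℝ) :
    kwong p r i i = p i ^ (r - 1) := by
  rw [kwong, of_apply, Real.rpow_sub_one hp, ← two_mul, ← two_mul,
    mul_div_mul_left _ _ two_ne_zero]

lemma trace_kwong_pos {n : ℕ} [NeZero n] {p : Fin n → ℝ} (hp : ∀ i, 0 < p i) (r : ℝ) :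
    0 < (kwong p r).trace :=
  Finset.sum_pos (fun i _ => by
    rw [diag_apply, kwong_apply_self (hp i).ne' r]
    exact Real.rpow_pos_of_pos (hp i) _) Finset.univ_nonempty

lemma det_kwong_two {p : Fin 2 → ℝ} (hp : ∀ i, 0 < p i) (r : ℝ) :
    (kwong p r).det = (p 0 ^ (r - 1) - p 1 ^ (r - 1)) *
      ((p 1 ^ (r + 1) - p 0 ^ (r + 1)) / (p 0 + p 1) ^ 2) := by
  have h0 := hp 0
  have h1 := hp 1
  have hsucc (i : Fin 2) : p i ^ r = p i ^ (r - 1) * p i := by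
    rw [Real.rpow_sub_one (hp i).ne', div_mul_cancel₀ _ (hp i).ne']
  rw [det_fin_two, kwong_apply_self h0.ne', kwong_apply_self h1.ne']
  simp only [kwong, of_apply]
  rw [Real.rpow_add_one h0.ne', Real.rpow_add_one h1.ne', hsucc 0, hsucc 1]
  field_simp
  ring

/-- for `0 < p 0 < p 1` and `r > 0`, the inertia of the `2 × 2` Kwong
matrix is `(2,0,0)` if `0 < r < 1`, `(1,1,0)` if `r = 1`, and `(1,0,1)` if `r > 1`. -/
theorem inertia_kwong_two {p : Fin 2 → ℝ} (hpos : ∀ i, 0 < p i) (hmono : StrictMono p)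
    (r : ℝ) (hr : 0 < r) :
    (r < 1 → inertia (kwong p r) (kwong_isHermitian p r) = (2, 0, 0)) ∧
    (r = 1 → inertia (kwong p r) (kwong_isHermitian p r) = (1, 1, 0)) ∧
    (1 < r → inertia (kwong p r) (kwong_isHermitian p r) = (1, 0, 1)) := by
  have hp01 : p 0 < p 1 := hmono Fin.zero_lt_one
  have hp0 := hpos 0
  have hp1 := hpos 1
  have hc : 0 < (p 1 ^ (r + 1) - p 0 ^ (r + 1)) / (p 0 + p 1) ^ 2 :=
    div_pos (sub_pos.mpr (Real.rpow_lt_rpow hp0.le hp01 (by linarith))) (by positivity)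
  have htr := trace_kwong_pos hpos r
  have hdet := det_kwong_two hpos r
  refine ⟨fun hr1 => ?_, fun hr1 => ?_, fun hr1 => ?_⟩
  · refine (kwong_isHermitian p r).inertia_eq_of_det_pos ?_ htr
    rw [hdet]
    exact mul_pos (sub_pos.mpr (Real.rpow_lt_rpow_of_neg hp0 hp01 (by linarith))) hc
  · refine (kwong_isHermitian p r).inertia_eq_of_det_eq_zero ?_ htr
    rw [hdet, hr1]
    simp
  · refine (kwong_isHermitian p r).inertia_eq_of_det_neg ?_
    rw [hdet]
    exact mul_neg_of_neg_of_pos (sub_neg.mpr (Real.rpow_lt_rpow hp0.le hp01 (by linarith))) hc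
end

section
/- Let p_1, ..., p_n be distinct positive real numbers and let r be an odd positive integer with r ≤ n. Then K_r(p_1,...,p_n) = Wᵀ V W, where W is the r×n Vandermonde matrix with (i,j) entry p_j^{i−1} (1 ≤ i ≤ r, 1 ≤ j ≤ n), and V is the r×r matrix whose (i,j) entry is (−1)^{i+1} when i + j = r + 1 and 0 otherwise. -/
open Matrix

/-- The `r × r` antidiagonal sign matrix: entry `(i,j)` (one-based) is `(-1)^{i+1}`
when `i + j = r + 1` and `0` otherwise. -/
def sylvV (r : ℕ) : Matrix (Fin r) (Fin r) ℝ :=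
  Matrix.of fun i j => if (i : ℕ) + (j : ℕ) + 1 = r then (-1 : ℝ) ^ (i : ℕ) else 0

/-- for `r` an odd positive integer with `r ≤ n`,
`Kᵣ = Wᵀ V W` where `W` is the `r × n` Vandermonde matrix `W i j = p j ^ i`
(zero-based) and `V` is the antidiagonal alternating-sign matrix. -/
theorem kwong_eq_vandermonde_factorization {n : ℕ} (p : Fin n → ℝ)
    (hpos : ∀ i, 0 < p i) (hinj : Function.Injective p)
    (r : ℕ) (hodd : Odd r) (hr0 : 0 < r) (hrn : r ≤ n) :
    kwong p (r : ℝ) =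
      (Matrix.of fun (i : Fin r) (j : Fin n) => p j ^ (i : ℕ))ᵀ * sylvV r *
        (Matrix.of fun (i : Fin r) (j : Fin n) => p j ^ (i : ℕ)) := by
  ext i j
  have key : (p i ^ r + p j ^ r) / (p i + p j)
      = ∑ k ∈ Finset.range r, (-1) ^ k * p i ^ k * p j ^ (r - 1 - k) := by
    have ha := hpos i
    have hb := hpos j
    rw [div_eq_iff (by positivity)]
    have hg := geom_sum₂_mul (p i) (-p j) r
    rw [sub_neg_eq_add, hodd.neg_pow, sub_neg_eq_add] at hg
    rw [← hg]
    congr 1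
    apply Finset.sum_congr rfl
    intro k hk
    have hk' : k < r := Finset.mem_range.mp hk
    have heven : Even (r - 1) := by
      obtain ⟨m, hm⟩ := hodd; exact ⟨m, by omega⟩
    have h1 : (-1 : ℝ) ^ (r - 1 - k) * (-1) ^ k = 1 := by
      rw [← pow_add, Nat.sub_add_cancel (by omega)]
      exact heven.neg_one_pow
    have hsq : (-1 : ℝ) ^ k * (-1) ^ k = 1 := by
      rw [← pow_add]; exact Even.neg_one_pow ⟨k, rfl⟩
    have h2 : (-1 : ℝ) ^ (r - 1 - k) = (-1) ^ k := by
      calc (-1 : ℝ) ^ (r - 1 - k) = (-1) ^ (r - 1 - k) * ((-1) ^ k * (-1) ^ k) := by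
            rw [hsq, mul_one]
        _ = ((-1) ^ (r - 1 - k) * (-1) ^ k) * (-1) ^ k := by ring
        _ = (-1) ^ k := by rw [h1, one_mul]
    rw [neg_pow, h2]
    ring
  have hL : kwong p (r : ℝ) i j = (p i ^ r + p j ^ r) / (p i + p j) := by
    simp [kwong, Real.rpow_natCast]
  rw [hL, key]
  simp only [Matrix.mul_apply, Matrix.transpose_apply, Matrix.of_apply, sylvV,
    Finset.sum_mul, mul_ite, mul_zero, ite_mul, zero_mul]
  rw [Finset.sum_comm]
  rw [← Fin.sum_univ_eq_sum_range]
  apply Finset.sum_congr rfl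
  intro l _
  have hiff : ∀ k : Fin r, ((l : ℕ) + (k : ℕ) + 1 = r) ↔ k = l.rev := by
    intro k
    rw [Fin.ext_iff, Fin.val_rev]
    omega
  rw [Finset.sum_congr rfl (fun k _ => by rw [if_congr (hiff k) rfl rfl]),
    Finset.sum_ite_eq' Finset.univ l.rev, if_pos (Finset.mem_univ _), Fin.val_rev]
  have hsub : r - ((l : ℕ) + 1) = r - 1 - (l : ℕ) := by omega
  rw [hsub]; ring
end

section
/- Let n be an odd positive integer, let p_1, ..., p_n be distinct positive real numbers, let c_1, ..., c_n be real numbers not all zero, and let r be a real number with r > n − 1. Then the function f on (0,∞) defined by f(x) = Σ_{j=1}^n c_j (x^r + p_j^r)/(x + p_j) has at most n − 1 zeros in (0,∞). -/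
/-!
Clearing denominators, `f x * ∏ₖ (x + p k) = Q x + x ^ r * P x` for polynomials `P`, `Q` of
degree `< n`: a generalized polynomial `∑ₖ aₖ x ^ μₖ` with the `2n` exponents
`0, …, n - 1, r, …, r + n - 1`, increasing because `r > n - 1`. By Descartes' rule of signs its
number of positive zeros is less than the length of some sign-alternating subsequence of `a`.
Since `n` is odd, the generalized polynomial with coefficients `(-1)ᵏ aₖ` is
`Q (-x) - x ^ r * P (-x)`, which vanishes at the `n` points `p i`. Finally, alternating
subsequences of `a` and of `(-1)ᵏ aₖ` have total length at most `2n + 1`, so `f` has at most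
`n - 1` positive zeros.
-/

open Finset Polynomial

lemma neg_one_pow_eq_of_mod_two_eq {R : Type*} [Ring R] {i j : ℕ} (h : i % 2 = j % 2) :
    (-1 : R) ^ i = (-1) ^ j := by
  rw [neg_one_pow_eq_pow_mod_two, h, ← neg_one_pow_eq_pow_mod_two]

lemma mod_two_eq_of_neg_one_pow_mul_pos {i j : ℕ} {t : ℝ} (hi : 0 < (-1) ^ i * t)
    (hj : 0 < (-1) ^ j * t) : i % 2 = j % 2 := by
  rcases Nat.even_or_odd i with hi' | hi' <;> rcases Nat.even_or_odd j with hj' | hj' <;>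
    simp only [hi'.neg_one_pow, hj'.neg_one_pow] at hi hj <;>
    simp only [Nat.even_iff, Nat.odd_iff] at hi' hj' <;> first | omega | linarith

lemma neg_one_pow_ite_mul_pos {i b x t : ℕ} {u v : ℝ} (h : 0 < (-1) ^ (i + b) * (u * v))
    (hu₀ : x < t → u < 0) (hu₁ : t ≤ x → 0 < u) :
    0 < (-1) ^ (i + (if x < t then 1 else 0) + b) * v := by
  rw [mul_left_comm] at h
  split_ifs with hx
  · have := neg_of_mul_pos_right h (hu₀ hx).le
    rw [add_right_comm, pow_succ, mul_neg_one, neg_mul]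
    linarith
  · simpa using pos_of_mul_pos_right h (hu₁ (not_lt.1 hx)).le

lemma card_filter_lt_add_one (S : Finset ℕ) (x : ℕ) :
    #{y ∈ S | y < x + 1} = #{y ∈ S | y < x} + if x ∈ S then 1 else 0 := by
  have : {y ∈ S | y < x + 1} = {y ∈ S | y < x} ∪ {y ∈ S | y = x} := by
    ext y
    simp [le_iff_lt_or_eq, and_or_left]
  rw [this, card_union_of_disjoint (disjoint_filter.2 fun _ _ h h' => h.ne h'), filter_eq']
  split_ifs <;> simp

lemma card_filter_lt_insert {S : Finset ℕ} {e x : ℕ} (he : e ∉ S) :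
    #{y ∈ insert e S | y < x} = #{y ∈ S | y < x} + if e < x then 1 else 0 := by
  rw [filter_insert]
  split_ifs
  · exact card_insert_of_notMem fun h => he (mem_filter.1 h).1
  · rfl

/-- The sign of `a` at the `i`-th smallest element of `S` is `(-1) ^ (i + b)`, so `S` indexes a
subsequence of `a` with `#S - 1` sign changes. -/
def IsSignAlternating (a : ℕ → ℝ) (S : Finset ℕ) : Prop :=
  ∃ b : ℕ, ∀ x ∈ S, 0 < (-1) ^ (#{y ∈ S | y < x} + b) * a x

lemma isSignAlternating_singleton {a : ℕ → ℝ} {k : ℕ} (hk : a k ≠ 0) :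
    IsSignAlternating a {k} := by
  rcases hk.lt_or_gt with h | h
  · exact ⟨1, by simpa [filter_singleton] using h⟩
  · exact ⟨0, by simpa [filter_singleton] using h⟩

lemma isSignAlternating_insert {a : ℕ → ℝ} {S : Finset ℕ} {b e t : ℕ} (he : e ∉ S)
    (hS : ∀ x ∈ S, 0 < (-1) ^ (#{y ∈ S | y < x} + (if x < t then 1 else 0) + b) * a x)
    (het : ∀ x ∈ S, x < e ↔ x < t) (hae : 0 < (-1) ^ (#{y ∈ S | y < t} + (b + 1)) * a e) :
    IsSignAlternating a (insert e S) := by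
  refine ⟨b + 1, fun x hx => ?_⟩
  rcases mem_insert.1 hx with rfl | hx
  · rwa [filter_insert, if_neg (lt_irrefl _), filter_congr het]
  · have hxe : x ≠ e := fun h => he (h ▸ hx)
    have := het x hx
    rw [card_filter_lt_insert he]
    convert hS x hx using 2
    apply neg_one_pow_eq_of_mod_two_eq
    split_ifs <;> omega

/-- A weight `w`, negative up to `j₀` and positive from `j₁` on, destroys the sign change of `a`
across the gap `(j₀, j₁)`; inserting `j₀` or `j₁` restores it. -/
theorem IsSignAlternating.exists_insert {a w : ℕ → ℝ} {S : Finset ℕ} {j₀ j₁ : ℕ}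
    (hS : IsSignAlternating (fun k => w k * a k) S) (hw₀ : ∀ k ≤ j₀, w k < 0)
    (hw₁ : ∀ k, j₁ ≤ k → 0 < w k) (hj : a j₀ * a j₁ < 0) (hgap : ∀ k ∈ Ioo j₀ j₁, a k = 0) :
    ∃ e, (e = j₀ ∨ e = j₁) ∧ e ∉ S ∧ IsSignAlternating a (insert e S) := by
  obtain ⟨b, hb⟩ := hS
  have hj₀₁ : j₀ < j₁ := by
    by_contra h
    linarith [hw₀ j₀ le_rfl, hw₁ j₀ (by omega)]
  have hside : ∀ x ∈ S, x ≤ j₀ ∨ j₁ ≤ x := by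
    intro x hx
    by_contra! h
    simpa [hgap x (mem_Ioo.2 ⟨by omega, by omega⟩)] using hb x hx
  have hsign : ∀ x ∈ S,
      0 < (-1) ^ (#{y ∈ S | y < x} + (if x < j₁ then 1 else 0) + b) * a x := fun x hx =>
    neg_one_pow_ite_mul_pos (hb x hx)
      (fun h => hw₀ x (by rcases hside x hx with h' | h' <;> omega)) (hw₁ x)
  set q := #{y ∈ S | y < j₁}
  -- The inserted index gets rank `q`, so it needs the sign `(-1) ^ (q + (b + 1))`; exactly one of
  -- `a j₀`, `a j₁` has it.
  by_cases h₀ : 0 < (-1) ^ (q + (b + 1)) * a j₀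
  · have hj₀S : j₀ ∉ S := by
      intro hj₀S
      have hq : q = #{y ∈ S | y < j₀ + 1} := by
        refine congrArg card (filter_congr fun x hx => ?_)
        rcases hside x hx with h | h <;> omega
      rw [card_filter_lt_add_one, if_pos hj₀S] at hq
      have := mod_two_eq_of_neg_one_pow_mul_pos h₀ (hsign j₀ hj₀S)
      rw [if_pos hj₀₁] at this
      omega
    refine ⟨j₀, .inl rfl, hj₀S, isSignAlternating_insert hj₀S hsign (fun x hx => ?_) h₀⟩
    have : x ≠ j₀ := fun h => hj₀S (h ▸ hx)
    rcases hside x hx with h | h <;> omega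
  · have h₁ : 0 < (-1) ^ (q + (b + 1)) * a j₁ := by
      refine pos_of_mul_neg_right (a := (-1) ^ (q + (b + 1)) * a j₀) ?_ (not_lt.1 h₀)
      calc _ = ((-1) ^ (q + (b + 1)) * (-1) ^ (q + (b + 1))) * (a j₀ * a j₁) := by ring
        _ < 0 := by rwa [← mul_pow, neg_one_mul, neg_neg, one_pow, one_mul]
    have hj₁S : j₁ ∉ S := by
      intro hj₁S
      have := mod_two_eq_of_neg_one_pow_mul_pos h₁ (hsign j₁ hj₁S)
      rw [if_neg (lt_irrefl _)] at this
      omega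
    exact ⟨j₁, .inr rfl, hj₁S, isSignAlternating_insert hj₁S hsign (fun _ _ => Iff.rfl) h₁⟩

/-- `D x := #{y ∈ S | y < x} + #{y ∈ T | y < x}` grows by at most one per step except at common
points of `S` and `T`, where the signs of `a` fix the parity of `D x + x`; this keeps
`D x ≤ x + 1`. -/
theorem card_add_card_le_of_isSignAlternating {a : ℕ → ℝ} {S T : Finset ℕ} {m : ℕ}
    (hS : IsSignAlternating a S) (hT : IsSignAlternating (fun k => (-1) ^ k * a k) T)
    (hSm : S ⊆ range m) (hTm : T ⊆ range m) : #S + #T ≤ m + 1 := by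
  obtain ⟨b, hb⟩ := hS
  obtain ⟨b', hb'⟩ := hT
  have hparity : ∀ x ∈ S, x ∈ T →
      (#{y ∈ S | y < x} + b) % 2 = (#{y ∈ T | y < x} + b' + x) % 2 := by
    intro x hxS hxT
    refine mod_two_eq_of_neg_one_pow_mul_pos (hb x hxS) ?_
    simpa only [pow_add, mul_assoc] using hb' x hxT
  have hD : ∀ x, #{y ∈ S | y < x} + #{y ∈ T | y < x} ≤ x ∨
      (#{y ∈ S | y < x} + #{y ∈ T | y < x} = x + 1 ∧ (b + b') % 2 = 0) := by
    intro x
    induction x with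
    | zero => simp
    | succ x ih =>
      rw [card_filter_lt_add_one, card_filter_lt_add_one]
      by_cases hxS : x ∈ S <;> by_cases hxT : x ∈ T <;> simp only [hxS, hxT, if_true, if_false]
      · have := hparity x hxS hxT
        omega
      all_goals omega
  have hSf : {y ∈ S | y < m} = S := filter_true_of_mem fun y hy => mem_range.1 (hSm hy)
  have hTf : {y ∈ T | y < m} = T := filter_true_of_mem fun y hy => mem_range.1 (hTm hy)
  have := hD m
  rw [hSf, hTf] at this
  omega

theorem exists_adjacent_mul_neg {a : ℕ → ℝ} {i j : ℕ} (hij : i < j) (h : a i * a j < 0) :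
    ∃ j₀ j₁, i ≤ j₀ ∧ j₀ < j₁ ∧ j₁ ≤ j ∧ a j₀ * a j₁ < 0 ∧ ∀ k ∈ Ioo j₀ j₁, a k = 0 := by
  induction hd : j - i using Nat.strong_induction_on generalizing i j with
  | _ d ih =>
  by_cases hgap : ∀ k ∈ Ioo i j, a k = 0
  · exact ⟨i, j, le_rfl, hij, le_rfl, h, hgap⟩
  push Not at hgap
  obtain ⟨k, hk, hak⟩ := hgap
  rw [mem_Ioo] at hk
  rcases (mul_ne_zero (left_ne_zero_of_mul h.ne) hak).lt_or_gt with hik | hik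
  · obtain ⟨j₀, j₁, h₁, h₂, h₃, h₄⟩ := ih (k - i) (by omega) hk.1 hik rfl
    exact ⟨j₀, j₁, h₁, h₂, by omega, h₄⟩
  · have hkj : a k * a j < 0 := by
      by_contra! hkj
      nlinarith [mul_nonneg hik.le hkj, mul_self_pos.2 hak]
    obtain ⟨j₀, j₁, h₁, h₂, h₃, h₄⟩ := ih (j - k) (by omega) hk.2 hkj rfl
    exact ⟨j₀, j₁, by omega, h₂, h₃, h₄⟩

theorem exists_deriv_zeros_of_zeros {f f' : ℝ → ℝ} {s : Set ℝ} (hs : s.OrdConnected)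
    (hf : ∀ x ∈ s, HasDerivAt f (f' x) x) (Z : Finset ℝ) (hZ : ∀ x ∈ Z, x ∈ s ∧ f x = 0) :
    ∃ Z' : Finset ℝ, (∀ x ∈ Z', x ∈ s ∧ f' x = 0) ∧ #Z ≤ #Z' + 1 := by
  by_cases hfin : {x | x ∈ s ∧ f' x = 0}.Finite
  · refine ⟨hfin.toFinset, fun x hx => hfin.mem_toFinset.1 hx,
      card_le_of_interleaved fun x hx y hy hxy _ => ?_⟩
    have hIcc : Set.Icc x y ⊆ s := hs.out (hZ x hx).1 (hZ y hy).1
    obtain ⟨z, hz, hz'⟩ := exists_hasDerivAt_eq_zero hxy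
      (fun t ht => (hf t (hIcc ht)).continuousAt.continuousWithinAt)
      ((hZ x hx).2.trans (hZ y hy).2.symm) (fun t ht => hf t (hIcc (Set.Ioo_subset_Icc_self ht)))
    exact ⟨z, hfin.mem_toFinset.2 ⟨hIcc (Set.Ioo_subset_Icc_self hz), hz'⟩, hz⟩
  · obtain ⟨Z', hZ', hcard⟩ := Set.Infinite.exists_subset_card_eq hfin #Z
    exact ⟨Z', fun x hx => hZ' hx, by omega⟩

noncomputable def genPoly (μ a : ℕ → ℝ) (m : ℕ) (x : ℝ) : ℝ :=
  ∑ k ∈ range m, a k * x ^ μ k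

/-- Rolle's theorem for `x ^ (-γ) * genPoly μ a m x`, whose derivative is
`x ^ (-γ - 1) * genPoly μ (fun k => (μ k - γ) * a k) m x`. -/
theorem exists_genPoly_sub_mul_zeros_of_zeros {μ a : ℕ → ℝ} {m : ℕ} (γ : ℝ) (Z : Finset ℝ)
    (hZ : ∀ x ∈ Z, 0 < x ∧ genPoly μ a m x = 0) :
    ∃ Z' : Finset ℝ, (∀ x ∈ Z', 0 < x ∧ genPoly μ (fun k => (μ k - γ) * a k) m x = 0) ∧
      #Z ≤ #Z' + 1 := by
  set f := fun x : ℝ => ∑ k ∈ range m, a k * x ^ (μ k - γ)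
  set f' := fun x : ℝ => ∑ k ∈ range m, a k * ((μ k - γ) * x ^ (μ k - γ - 1))
  have hf : ∀ x ∈ Set.Ioi (0 : ℝ), HasDerivAt f (f' x) x := fun x hx =>
    HasDerivAt.fun_sum fun k _ => (Real.hasDerivAt_rpow_const (.inl hx.ne')).const_mul (a k)
  have hf_eq : ∀ x : ℝ, 0 < x → f x = x ^ (-γ) * genPoly μ a m x := fun x hx => by
    rw [genPoly, mul_sum]
    refine sum_congr rfl fun k _ => ?_
    rw [sub_eq_add_neg, Real.rpow_add hx]
    ring
  have hf'_eq : ∀ x : ℝ, 0 < x →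
      f' x = x ^ (-γ - 1) * genPoly μ (fun k => (μ k - γ) * a k) m x := fun x hx => by
    rw [genPoly, mul_sum]
    refine sum_congr rfl fun k _ => ?_
    rw [show μ k - γ - 1 = μ k + (-γ - 1) by ring, Real.rpow_add hx]
    ring
  obtain ⟨Z', hZ', hcard⟩ := exists_deriv_zeros_of_zeros Set.ordConnected_Ioi hf Z
    fun x hx => ⟨(hZ x hx).1, by rw [hf_eq x (hZ x hx).1, (hZ x hx).2, mul_zero]⟩
  refine ⟨Z', fun x hx => ⟨(hZ' x hx).1, ?_⟩, hcard⟩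
  have h := hf'_eq x (hZ' x hx).1 ▸ (hZ' x hx).2
  exact (mul_eq_zero.1 h).resolve_left (Real.rpow_pos_of_pos (hZ' x hx).1 _).ne'

theorem exists_mul_neg_of_genPoly_eq_zero {μ a : ℕ → ℝ} {m : ℕ} {x : ℝ}
    (ha : ∃ k < m, a k ≠ 0) (hx : 0 < x) (h : genPoly μ a m x = 0) :
    ∃ i j, i < j ∧ j < m ∧ a i * a j < 0 := by
  obtain ⟨k, hkm, hk⟩ := ha
  by_contra! hsame
  have hsame' : ∀ i < m, 0 ≤ a k * a i := fun i hi => by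
    rcases lt_trichotomy k i with hki | rfl | hik
    · exact hsame k i hki hi
    · exact mul_self_nonneg _
    · exact mul_comm (a i) (a k) ▸ hsame i k hik hkm
  have : 0 < a k * genPoly μ a m x := by
    rw [genPoly, mul_sum]
    refine sum_pos' (fun i hi => ?_) ⟨k, mem_range.2 hkm, ?_⟩
    · rw [← mul_assoc]
      exact mul_nonneg (hsame' i (mem_range.1 hi)) (Real.rpow_nonneg hx.le _)
    · rw [← mul_assoc]
      exact mul_pos (mul_self_pos.2 hk) (Real.rpow_pos_of_pos hx _)
  rw [h, mul_zero] at this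
  exact lt_irrefl _ this

/-- Descartes' rule of signs for generalized polynomials. -/
theorem exists_isSignAlternating_of_genPoly_zeros {μ a : ℕ → ℝ} {m : ℕ} (hμ : StrictMono μ)
    (ha : ∃ k < m, a k ≠ 0) (Z : Finset ℝ) (hZ : ∀ x ∈ Z, 0 < x ∧ genPoly μ a m x = 0) :
    ∃ S ⊆ range m, IsSignAlternating a S ∧ #Z < #S := by
  induction hN : #Z generalizing a Z with
  | zero =>
    obtain ⟨k, hkm, hk⟩ := ha
    exact ⟨{k}, by simpa using hkm, isSignAlternating_singleton hk, by simp⟩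
  | succ N ih =>
    obtain ⟨z, hz⟩ : Z.Nonempty := card_pos.1 (by omega)
    obtain ⟨i, j, hij, hjm, hneg⟩ :=
      exists_mul_neg_of_genPoly_eq_zero ha (hZ z hz).1 (hZ z hz).2
    obtain ⟨j₀, j₁, -, hj₀₁, hj₁j, hj, hgap⟩ := exists_adjacent_mul_neg hij hneg
    obtain ⟨γ, hγ₀, hγ₁⟩ := exists_between (hμ hj₀₁)
    obtain ⟨Z', hZ', hcard⟩ := exists_genPoly_sub_mul_zeros_of_zeros γ Z hZ
    obtain ⟨Z'', hZ''Z', hZ''⟩ := exists_subset_card_eq (show N ≤ #Z' by omega)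
    obtain ⟨S', hS'm, hS', hS'card⟩ := ih (a := fun k => (μ k - γ) * a k)
      ⟨j₀, by omega, mul_ne_zero (by linarith) (left_ne_zero_of_mul hj.ne)⟩ Z''
      (fun x hx => hZ' x (hZ''Z' hx)) hZ''
    obtain ⟨e, he, heS, hSe⟩ := hS'.exists_insert
      (fun k hk => by linarith [hμ.monotone hk]) (fun k hk => by linarith [hμ.monotone hk])
      hj hgap
    refine ⟨insert e S', insert_subset (mem_range.2 (by omega)) hS'm, hSe, ?_⟩
    rw [card_insert_of_notMem heS]
    omega

def splice (n : ℕ) (u v : ℕ → ℝ) (k : ℕ) : ℝ :=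
  if k < n then u k else v (k - n)

lemma strictMono_splice {n : ℕ} {r : ℝ} (hr : (n : ℝ) - 1 < r) :
    StrictMono (splice n (fun k => (k : ℝ)) fun k => r + k) := by
  refine strictMono_nat_of_lt_succ fun k => ?_
  simp only [splice]
  split_ifs with h₁ h₂ h₂
  · push_cast
    linarith
  · obtain rfl : n = k + 1 := by omega
    push_cast at hr
    rw [Nat.sub_self, Nat.cast_zero, add_zero]
    linarith
  · omega
  · rw [Nat.sub_add_comm (by omega)]
    push_cast
    linarith

lemma genPoly_splice {n : ℕ} {r x : ℝ} (hx : 0 < x) (u v : ℕ → ℝ) :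
    genPoly (splice n (fun k => (k : ℝ)) fun k => r + k) (splice n u v) (n + n) x =
      ∑ k ∈ range n, u k * x ^ k + x ^ r * ∑ k ∈ range n, v k * x ^ k := by
  rw [genPoly, sum_range_add, mul_sum]
  congr 1
  · refine sum_congr rfl fun k hk => ?_
    simp [splice, mem_range.1 hk, Real.rpow_natCast]
  · refine sum_congr rfl fun k _ => ?_
    simp only [splice, if_neg (Nat.not_lt.2 (Nat.le_add_right n k)), Nat.add_sub_cancel_left,
      Real.rpow_add hx, Real.rpow_natCast]
    ring

lemma genPoly_splice_coeff {n : ℕ} {r x : ℝ} (hx : 0 < x) {P Q : ℝ[X]} (hP : P.natDegree < n)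
    (hQ : Q.natDegree < n) :
    genPoly (splice n (fun k => (k : ℝ)) fun k => r + k) (splice n Q.coeff P.coeff) (n + n) x =
      Q.eval x + x ^ r * P.eval x := by
  rw [genPoly_splice hx, eval_eq_sum_range' hQ, eval_eq_sum_range' hP]

lemma genPoly_neg_one_pow_mul_splice_coeff {n : ℕ} (hn : Odd n) {r x : ℝ} (hx : 0 < x)
    {P Q : ℝ[X]} (hP : P.natDegree < n) (hQ : Q.natDegree < n) :
    genPoly (splice n (fun k => (k : ℝ)) fun k => r + k)
        (fun k => (-1) ^ k * splice n Q.coeff P.coeff k) (n + n) x =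
      Q.eval (-x) - x ^ r * P.eval (-x) := by
  have : (fun k => (-1) ^ k * splice n Q.coeff P.coeff k) =
      splice n (fun k => (-1) ^ k * Q.coeff k) fun k => -((-1) ^ k * P.coeff k) := by
    ext k
    simp only [splice]
    split_ifs with hk
    · rfl
    · obtain ⟨j, rfl⟩ := Nat.exists_eq_add_of_le (not_lt.1 hk)
      rw [Nat.add_sub_cancel_left, pow_add, hn.neg_one_pow]
      ring
  rw [this, genPoly_splice hx, eval_eq_sum_range' hQ, eval_eq_sum_range' hP, sub_eq_add_neg,
    ← mul_neg, ← sum_neg_distrib]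
  congr 1
  · exact sum_congr rfl fun k _ => by rw [neg_pow]; ring
  · exact congrArg _ (sum_congr rfl fun k _ => by rw [neg_pow]; ring)

section prodEraseSum

variable {n : ℕ} (p : Fin n → ℝ)

noncomputable def prodEraseSum (d : Fin n → ℝ) : ℝ[X] :=
  ∑ j, C (d j) * ∏ k ∈ univ.erase j, (X + C (p k))

lemma eval_prodEraseSum (d : Fin n → ℝ) (x : ℝ) :
    (prodEraseSum p d).eval x = ∑ j, d j * ∏ k ∈ univ.erase j, (x + p k) := by
  simp [prodEraseSum, eval_finsetSum, eval_prod]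

lemma eval_neg_prodEraseSum (d : Fin n → ℝ) (i : Fin n) :
    (prodEraseSum p d).eval (-p i) = d i * ∏ k ∈ univ.erase i, (p k - p i) := by
  rw [eval_prodEraseSum, sum_eq_single i]
  · simp only [neg_add_eq_sub]
  · intro j _ hji
    rw [prod_eq_zero (mem_erase.2 ⟨Ne.symm hji, mem_univ i⟩) (neg_add_cancel _), mul_zero]
  · simp

lemma prodEraseSum_ne_zero {p} (hp : Function.Injective p) {d : Fin n → ℝ} (hd : d ≠ 0) :
    prodEraseSum p d ≠ 0 := by
  obtain ⟨i, hi⟩ := Function.ne_iff.1 hd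
  have hprod : ∏ k ∈ univ.erase i, (p k - p i) ≠ 0 :=
    prod_ne_zero_iff.2 fun k hk => sub_ne_zero.2 fun h => (mem_erase.1 hk).1 (hp h)
  intro h
  have := eval_neg_prodEraseSum p d i
  rw [h, eval_zero] at this
  exact mul_ne_zero hi hprod this.symm

lemma natDegree_prodEraseSum_lt (hn : 0 < n) (d : Fin n → ℝ) :
    (prodEraseSum p d).natDegree < n := by
  refine Nat.lt_of_le_pred hn (natDegree_sum_le_of_forall_le _ _ fun j _ => ?_)
  refine (natDegree_C_mul_le _ _).trans ((natDegree_prod_le _ _).trans ?_)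
  simp [card_erase_of_mem]

lemma sum_div_mul_prod_eq {r x : ℝ} (hp : ∀ i, 0 < p i) (hx : 0 < x) (c : Fin n → ℝ) :
    (∑ j, c j * ((x ^ r + p j ^ r) / (x + p j))) * ∏ k, (x + p k) =
      (prodEraseSum p fun j => c j * p j ^ r).eval x + x ^ r * (prodEraseSum p c).eval x := by
  rw [eval_prodEraseSum, eval_prodEraseSum, mul_sum, ← sum_add_distrib, sum_mul]
  refine sum_congr rfl fun j _ => ?_
  rw [← mul_prod_erase univ _ (mem_univ j)]
  field_simp [(add_pos hx (hp j)).ne']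
  ring

lemma eval_neg_prodEraseSum_sub (r : ℝ) (c : Fin n → ℝ) (i : Fin n) :
    (prodEraseSum p fun j => c j * p j ^ r).eval (-p i) -
      p i ^ r * (prodEraseSum p c).eval (-p i) = 0 := by
  rw [eval_neg_prodEraseSum, eval_neg_prodEraseSum]
  ring

end prodEraseSum

theorem Set.encard_le_coe_of_forall_finset {α : Type*} {s : Set α} {k : ℕ}
    (h : ∀ t : Finset α, ↑t ⊆ s → #t ≤ k) : s.encard ≤ k := by
  by_cases hs : s.Finite
  · rw [hs.encard_eq_coe_toFinset_card]
    exact_mod_cast h _ (by simp)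
  · obtain ⟨t, hts, ht⟩ := Set.Infinite.exists_subset_card_eq hs (k + 1)
    have := h t hts
    omega

/-- for `n` odd, `p 0, …, p (n-1)` distinct positive reals, coefficients
`c` not all zero, and `r > n - 1`, the function
`f x = Σⱼ c j * (x^r + (p j)^r) / (x + p j)` has at most `n - 1` zeros in `(0, ∞)`. -/
theorem kwong_function_zeros {n : ℕ} (hn : Odd n) (p : Fin n → ℝ)
    (hpos : ∀ i, 0 < p i) (hinj : Function.Injective p)
    (c : Fin n → ℝ) (hc : c ≠ 0) (r : ℝ) (hr : (n : ℝ) - 1 < r) :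
    {x : ℝ | x ∈ Set.Ioi (0 : ℝ) ∧
        ∑ j, c j * ((x ^ r + p j ^ r) / (x + p j)) = 0}.encard ≤ (n - 1 : ℕ) := by
  set P := prodEraseSum p c
  set Q := prodEraseSum p fun j => c j * p j ^ r
  have hP : P.natDegree < n := natDegree_prodEraseSum_lt p hn.pos c
  have hQ : Q.natDegree < n := natDegree_prodEraseSum_lt p hn.pos _
  have ha : splice n Q.coeff P.coeff (n + P.natDegree) ≠ 0 := by
    simpa [splice] using prodEraseSum_ne_zero hinj hc
  refine Set.encard_le_coe_of_forall_finset fun Z hZ => ?_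
  obtain ⟨S, hSm, hS, hZS⟩ := exists_isSignAlternating_of_genPoly_zeros (m := n + n)
    (strictMono_splice hr) ⟨_, by omega, ha⟩ Z fun x hx => ⟨(hZ hx).1, by
      rw [genPoly_splice_coeff (hZ hx).1 hP hQ, ← sum_div_mul_prod_eq p hpos (hZ hx).1,
        (hZ hx).2, zero_mul]⟩
  obtain ⟨T, hTm, hT, hnT⟩ := exists_isSignAlternating_of_genPoly_zeros (m := n + n)
    (a := fun k => (-1) ^ k * splice n Q.coeff P.coeff k)
    (strictMono_splice hr) ⟨_, by omega, mul_ne_zero (pow_ne_zero _ (by norm_num)) ha⟩ (univ.image p) <| by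
      simp only [mem_image, mem_univ, true_and, forall_exists_index, forall_apply_eq_imp_iff]
      exact fun i => ⟨hpos i, by rw [genPoly_neg_one_pow_mul_splice_coeff hn (hpos i) hP hQ,
        eval_neg_prodEraseSum_sub]⟩
  rw [card_image_of_injective _ hinj, card_univ, Fintype.card_fin] at hnT
  have := card_add_card_le_of_isSignAlternating hS hT hSm hTm
  omega
end

section
/- Let n be an odd positive integer, let p_1, ..., p_n and q_1, ..., q_n each be n-tuples of distinct positive real numbers, and let r be a real number with r > n − 1. Then the n×n matrix whose (i,j) entry is (p_i^r + q_j^r)/(p_i + q_j) is nonsingular. In particular, for n odd and r > n − 1 the Kwong matrix K_r(p_1,...,p_n) is nonsingular. -/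
open Matrix

/-!
If `M = [(pᵢʳ + qⱼʳ)/(pᵢ + qⱼ)]` kills a vector `c ≠ 0`, clearing the denominators
`∏ⱼ (t + qⱼ)` turns the rows of `M c = 0` into the vanishing at every `pᵢ` of
`f(t) = sign(t) |t|ʳ A(t) + B(t)`, where `A ≠ 0` and `B` are polynomials of degree `< n`;
the sign factor makes `f` vanish at every `-qⱼ` as well, so `f` has `2n` zeros.
Away from `0` the `k`-th derivative of `f` is `sign(t)^(k+1) |t|^(r-k) Aₖ(t) + B⁽ᵏ⁾(t)`,
where `Aₖ ≠ 0` has degree at most `deg A` as long as `k - 1 < r`. For `k < r` this is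
continuous on `ℝ`, and Rolle's theorem survives the one bad point `0` because the
derivative is a positive weight times a continuous function; so each derivative loses at
most one zero. At `k = n` the term `B⁽ⁿ⁾` is gone and, `n` being odd, the sign factor is
`+1`, so the zeros of the `n`-th derivative are the at most `n - 1` roots of `Aₙ`.
Hence `2n ≤ (n - 1) + n`, which is absurd.
-/

section Rolle

open Set

theorem IsPreconnected.forall_pos_or_forall_neg {α : Type*} [TopologicalSpace α] {s : Set α}
    {f : α → ℝ} (hs : IsPreconnected s) (hf : ContinuousOn f s) (hf0 : ∀ x ∈ s, f x ≠ 0) :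
    (∀ x ∈ s, 0 < f x) ∨ ∀ x ∈ s, f x < 0 := by
  by_contra! ⟨⟨x, hx, hfx⟩, y, hy, hfy⟩
  obtain ⟨z, hz, hfz⟩ := hs.intermediate_value hx hy hf ⟨hfx, hfy⟩
  exact hf0 z hz hfz

theorem strictMonoOn_Icc_of_hasDerivAt_pos {f f' : ℝ → ℝ} {a b : ℝ}
    (hf : ContinuousOn f (Icc a b)) (hd : ∀ t ∈ Ioo a b, HasDerivAt f (f' t) t)
    (hpos : ∀ t ∈ Ioo a b, 0 < f' t) : StrictMonoOn f (Icc a b) :=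
  strictMonoOn_of_hasDerivWithinAt_pos (convex_Icc a b) hf
    (by simpa only [interior_Icc] using fun t ht => (hd t ht).hasDerivWithinAt)
    (by simpa only [interior_Icc] using hpos)

theorem lt_of_hasDerivAt_pos_of_ne {f f' : ℝ → ℝ} {a b x₀ : ℝ} (hab : a < b)
    (hf : ContinuousOn f (Icc a b)) (hd : ∀ t ∈ Ioo a b, t ≠ x₀ → HasDerivAt f (f' t) t)
    (hpos : ∀ t ∈ Ioo a b, t ≠ x₀ → 0 < f' t) : f a < f b := by
  by_cases hx : x₀ ∈ Ioo a b
  · have hax : f a < f x₀ :=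
      strictMonoOn_Icc_of_hasDerivAt_pos (hf.mono (Icc_subset_Icc_right hx.2.le))
        (fun t ht => hd t ⟨ht.1, ht.2.trans hx.2⟩ ht.2.ne)
        (fun t ht => hpos t ⟨ht.1, ht.2.trans hx.2⟩ ht.2.ne)
        (left_mem_Icc.2 hx.1.le) (right_mem_Icc.2 hx.1.le) hx.1
    have hxb : f x₀ < f b :=
      strictMonoOn_Icc_of_hasDerivAt_pos (hf.mono (Icc_subset_Icc_left hx.1.le))
        (fun t ht => hd t ⟨hx.1.trans ht.1, ht.2⟩ ht.1.ne')
        (fun t ht => hpos t ⟨hx.1.trans ht.1, ht.2⟩ ht.1.ne')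
        (left_mem_Icc.2 hx.2.le) (right_mem_Icc.2 hx.2.le) hx.2
    exact hax.trans hxb
  · exact strictMonoOn_Icc_of_hasDerivAt_pos hf
      (fun t ht => hd t ht (ne_of_mem_of_not_mem ht hx))
      (fun t ht => hpos t ht (ne_of_mem_of_not_mem ht hx))
      (left_mem_Icc.2 hab.le) (right_mem_Icc.2 hab.le) hab

theorem exists_mem_Ioo_eq_zero_of_hasDerivAt_mul {h w K : ℝ → ℝ} {a b x₀ : ℝ} (hab : a < b)
    (hh : ContinuousOn h (Icc a b)) (hK : ContinuousOn K (Ioo a b))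
    (hw : ∀ t ∈ Ioo a b, t ≠ x₀ → 0 < w t)
    (hd : ∀ t ∈ Ioo a b, t ≠ x₀ → HasDerivAt h (w t * K t) t) (hhab : h a = h b) :
    ∃ c ∈ Ioo a b, K c = 0 := by
  by_contra! hK0
  rcases isPreconnected_Ioo.forall_pos_or_forall_neg hK hK0 with hpos | hneg
  · exact (lt_of_hasDerivAt_pos_of_ne hab hh hd
      fun t ht hx => mul_pos (hw t ht hx) (hpos t ht)).ne hhab
  · refine (lt_of_hasDerivAt_pos_of_ne (f := fun t => -h t) hab hh.neg
      (fun t ht hx => (hd t ht hx).neg)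
      fun t ht hx => neg_pos.2 (mul_neg_of_pos_of_neg (hw t ht hx) (hneg t ht))).ne ?_
    rw [hhab]

theorem Set.encard_le_encard_add_one_of_interleaved {α : Type*} [LinearOrder α] {s t : Set α}
    (h : ∀ x ∈ s, ∀ y ∈ s, x < y → ∃ z ∈ t, x < z ∧ z < y) : s.encard ≤ t.encard + 1 := by
  rcases t.finite_or_infinite with ht | ht
  · lift t to Finset α using ht
    by_contra! hlt
    rw [encard_coe_eq_coe_finsetCard] at hlt
    have hle : ((t.card + 2 : ℕ) : ℕ∞) ≤ s.encard := by
      push_cast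
      rw [← one_add_one_eq_two, ← add_assoc]
      exact Order.add_one_le_of_lt hlt
    obtain ⟨u, hus, hu⟩ := exists_subset_encard_eq hle
    lift u to Finset α using finite_of_encard_eq_coe hu
    have := Finset.card_le_of_interleaved (s := u) (t := t)
      fun x hx y hy hxy _ => h x (hus hx) y (hus hy) hxy
    rw [encard_coe_eq_coe_finsetCard, Nat.cast_inj] at hu
    omega
  · simp [ht.encard_eq]

theorem encard_setOf_eq_zero_le_of_hasDerivAt_mul {h w K : ℝ → ℝ} {x₀ : ℝ} (hh : Continuous h)
    (hK : Continuous K) (hw : ∀ t ≠ x₀, 0 < w t) (hd : ∀ t ≠ x₀, HasDerivAt h (w t * K t) t) :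
    {t | h t = 0}.encard ≤ {t | K t = 0}.encard + 1 :=
  Set.encard_le_encard_add_one_of_interleaved fun a ha b hb hab => by
    obtain ⟨c, hc, hKc⟩ := exists_mem_Ioo_eq_zero_of_hasDerivAt_mul hab hh.continuousOn
      hK.continuousOn (fun t _ => hw t) (fun t _ => hd t) (ha.trans hb.symm)
    exact ⟨c, hKc, hc⟩

end Rolle

namespace Polynomial

open Finset

noncomputable def eulerOp (σ : ℝ) (P : ℝ[X]) : ℝ[X] := C σ * P + X * derivative P

theorem coeff_eulerOp (σ : ℝ) (P : ℝ[X]) (m : ℕ) :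
    (eulerOp σ P).coeff m = (σ + m) * P.coeff m := by
  rcases m with _ | m
  · simp [eulerOp]
  · rw [eulerOp, coeff_add, coeff_C_mul, coeff_X_mul, coeff_derivative]
    push_cast
    ring

noncomputable def eulerIter (r : ℝ) (A : ℝ[X]) : ℕ → ℝ[X]
  | 0 => A
  | k + 1 => eulerOp (r - k) (eulerIter r A k)

theorem coeff_eulerIter (r : ℝ) (A : ℝ[X]) (k m : ℕ) :
    (eulerIter r A k).coeff m = (∏ i ∈ range k, (r - i + m)) * A.coeff m := by
  induction k with
  | zero => simp [eulerIter]
  | succ k ih => rw [eulerIter, coeff_eulerOp, ih, prod_range_succ]; ring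

theorem natDegree_eulerIter_le (r : ℝ) (A : ℝ[X]) (k : ℕ) :
    (eulerIter r A k).natDegree ≤ A.natDegree :=
  natDegree_le_iff_coeff_eq_zero.2 fun m hm => by
    rw [coeff_eulerIter, coeff_eq_zero_of_natDegree_lt hm, mul_zero]

theorem eulerIter_ne_zero {r : ℝ} {A : ℝ[X]} (hA : A ≠ 0) {k : ℕ} (hk : (k : ℝ) - 1 < r) :
    eulerIter r A k ≠ 0 := by
  have hcoeff : (eulerIter r A k).coeff A.natDegree ≠ 0 := by
    rw [coeff_eulerIter, coeff_natDegree]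
    refine mul_ne_zero (prod_ne_zero_iff.2 fun i hi => ?_) (leadingCoeff_ne_zero.2 hA)
    have hi : (i : ℝ) + 1 ≤ k := by exact_mod_cast mem_range.1 hi
    have : (0 : ℝ) ≤ A.natDegree := Nat.cast_nonneg _
    linarith
  exact fun h => hcoeff (by rw [h, coeff_zero])

theorem encard_setOf_eval_eq_zero_le {R : Type*} [CommRing R] [IsDomain R] {P : R[X]}
    (hP : P ≠ 0) : {t | P.eval t = 0}.encard ≤ P.natDegree := by
  classical
  have hset : {t | P.eval t = 0} = ↑P.roots.toFinset := by
    ext t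
    simp [mem_roots hP]
  rw [hset, Set.encard_coe_eq_coe_finsetCard, Nat.cast_le]
  exact (Multiset.toFinset_card_le _).trans (card_roots' P)

end Polynomial

section OddPower

open Polynomial SignType

theorem continuous_sign_pow_mul_abs_rpow (m : ℕ) {σ : ℝ} (hσ : 0 < σ) :
    Continuous fun t : ℝ => (sign t : ℝ) ^ m * |t| ^ σ := by
  have habs : Continuous fun t : ℝ => |t| ^ σ := continuous_abs.rpow_const fun _ => Or.inr hσ.le
  refine continuous_iff_continuousAt.2 fun t => ?_
  rcases eq_or_ne t 0 with rfl | ht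
  · have hlim : Filter.Tendsto (fun t : ℝ => |t| ^ σ) (nhds 0) (nhds 0) := by
      simpa [Real.zero_rpow hσ.ne'] using habs.tendsto 0
    have hbound (t : ℝ) : ‖(sign t : ℝ) ^ m * |t| ^ σ‖ ≤ |t| ^ σ := by
      rw [norm_mul, norm_pow, Real.norm_of_nonneg (by positivity : (0 : ℝ) ≤ |t| ^ σ)]
      refine mul_le_of_le_one_left (by positivity) (pow_le_one₀ (norm_nonneg _) ?_)
      rcases lt_trichotomy t 0 with ht | rfl | ht <;> simp [*]
    simpa [ContinuousAt, Real.zero_rpow hσ.ne'] using squeeze_zero_norm hbound hlim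
  · exact (((continuous_of_discreteTopology (f := ((↑) : SignType → ℝ))).continuousAt.comp
      (continuousAt_sign_of_ne_zero ht)).pow m).mul habs.continuousAt

theorem hasDerivAt_sign_pow_mul_abs_rpow_mul_eval (m : ℕ) (σ : ℝ) (P : ℝ[X]) {t : ℝ}
    (ht : t ≠ 0) :
    HasDerivAt (fun s => (sign s : ℝ) ^ m * |s| ^ σ * P.eval s)
      ((sign t : ℝ) ^ (m + 1) * |t| ^ (σ - 1) * (eulerOp σ P).eval t) t := by
  have hsign : HasDerivAt (fun s => (sign s : ℝ) ^ m) 0 t := by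
    refine (hasDerivAt_const t ((sign t : ℝ) ^ m)).congr_of_eventuallyEq ?_
    filter_upwards [(continuousAt_sign_of_ne_zero ht).eventually_mem
      ((isOpen_discrete {sign t}).mem_nhds rfl)] with s hs
    rw [Set.mem_singleton_iff.1 hs]
  have habs : HasDerivAt (fun s => |s| ^ σ) (σ * |t| ^ (σ - 1) * sign t) t :=
    (Real.hasDerivAt_rpow_const (Or.inl (abs_ne_zero.2 ht))).comp t (hasDerivAt_abs ht)
  have hpow : |t| ^ σ = |t| ^ (σ - 1) * (sign t * t) := by
    rw [sign_mul_self, ← Real.rpow_add_one (abs_ne_zero.2 ht), sub_add_cancel]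
  refine ((hsign.mul habs).mul (P.hasDerivAt t)).congr_deriv ?_
  simp only [eulerOp, eval_add, eval_mul, eval_C, eval_X, Pi.mul_apply, hpow]
  ring

noncomputable def oddRpowDeriv (r : ℝ) (A B : ℝ[X]) (k : ℕ) (t : ℝ) : ℝ :=
  (sign t : ℝ) ^ (k + 1) * |t| ^ (r - k) * (eulerIter r A k).eval t + (derivative^[k] B).eval t

theorem oddRpowDeriv_zero (r : ℝ) (A B : ℝ[X]) (t : ℝ) :
    oddRpowDeriv r A B 0 t = sign t * |t| ^ r * A.eval t + B.eval t := by
  simp [oddRpowDeriv, eulerIter]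

theorem hasDerivAt_oddRpowDeriv (r : ℝ) (A B : ℝ[X]) (k : ℕ) {t : ℝ} (ht : t ≠ 0) :
    HasDerivAt (oddRpowDeriv r A B k) (oddRpowDeriv r A B (k + 1) t) t := by
  have h := (hasDerivAt_sign_pow_mul_abs_rpow_mul_eval (k + 1) (r - k) (eulerIter r A k) ht).add
    ((derivative^[k] B).hasDerivAt t)
  unfold oddRpowDeriv
  rwa [eulerIter, Function.iterate_succ_apply', Nat.cast_succ, ← sub_sub]

theorem continuous_oddRpowDeriv {r : ℝ} (A B : ℝ[X]) {k : ℕ} (hk : (k : ℝ) < r) :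
    Continuous (oddRpowDeriv r A B k) :=
  ((continuous_sign_pow_mul_abs_rpow (k + 1) (sub_pos.2 hk)).mul
    (eulerIter r A k).continuous).add (derivative^[k] B).continuous

theorem encard_setOf_oddRpowDeriv_eq_zero_le_succ {r : ℝ} (A B : ℝ[X]) {k : ℕ}
    (hk : (k : ℝ) + 1 < r) :
    {t | oddRpowDeriv r A B k t = 0}.encard ≤ {t | oddRpowDeriv r A B (k + 1) t = 0}.encard + 1 :=
  encard_setOf_eq_zero_le_of_hasDerivAt_mul (w := 1) (x₀ := 0)
    (continuous_oddRpowDeriv A B (by linarith))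
    (continuous_oddRpowDeriv A B (by push_cast; linarith)) (fun _ _ => one_pos)
    fun t ht => by simpa using hasDerivAt_oddRpowDeriv r A B k ht

-- `B` disappears in the next derivative, whose sign factor `sign t ^ (k + 2)` is positive.
theorem encard_setOf_oddRpowDeriv_eq_zero_le_of_even {r : ℝ} {A B : ℝ[X]} {k : ℕ} (hk : Even k)
    (hkr : (k : ℝ) < r) (hA : A ≠ 0) (hB : B.natDegree ≤ k) :
    {t | oddRpowDeriv r A B k t = 0}.encard ≤ A.natDegree + 1 := by
  set P := eulerIter r A (k + 1)
  have hlast : {t | oddRpowDeriv r A B k t = 0}.encard ≤ {t | P.eval t = 0}.encard + 1 := by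
    refine encard_setOf_eq_zero_le_of_hasDerivAt_mul (x₀ := 0)
      (w := fun t => (sign t : ℝ) ^ (k + 2) * |t| ^ (r - (k + 1 : ℕ)))
      (continuous_oddRpowDeriv A B hkr) P.continuous (fun t ht => ?_) fun t ht => ?_
    · have hsign : (sign t : ℝ) ≠ 0 := by
        rcases ht.lt_or_gt with h | h <;> simp [sign_neg, sign_pos, h]
      exact mul_pos ((hk.add even_two).pow_pos hsign) (Real.rpow_pos_of_pos (abs_pos.2 ht) _)
    · refine (hasDerivAt_oddRpowDeriv r A B k ht).congr_deriv ?_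
      simp only [oddRpowDeriv, iterate_derivative_eq_zero (Nat.lt_succ_of_le hB), eval_zero,
        add_zero, P]
  have hroots : {t | P.eval t = 0}.encard ≤ A.natDegree :=
    (encard_setOf_eval_eq_zero_le (eulerIter_ne_zero hA (by push_cast; linarith))).trans
      (by exact_mod_cast natDegree_eulerIter_le r A _)
  exact hlast.trans (add_le_add_left hroots 1)

theorem encard_setOf_sign_mul_abs_rpow_mul_add_eq_zero_lt {n : ℕ} (hn : Odd n) {r : ℝ}
    (hr : (n : ℝ) - 1 < r) {A B : ℝ[X]} (hA : A ≠ 0) (hAn : A.natDegree < n)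
    (hBn : B.natDegree < n) :
    {t : ℝ | sign t * |t| ^ r * A.eval t + B.eval t = 0}.encard < 2 * n := by
  obtain ⟨m, rfl⟩ := hn
  push_cast at hr
  set Z : ℕ → ℕ∞ := fun k => {t | oddRpowDeriv r A B k t = 0}.encard
  have hchain (k : ℕ) (hk : k ≤ 2 * m) : Z 0 ≤ Z k + k := by
    induction k with
    | zero => simp
    | succ k ih =>
      have hkr : (k : ℝ) + 1 < r := by
        have : (k : ℝ) + 1 ≤ 2 * m := by exact_mod_cast hk
        linarith
      calc Z 0 ≤ Z k + k := ih (by omega)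
        _ ≤ Z (k + 1) + 1 + k := by gcongr; exact encard_setOf_oddRpowDeriv_eq_zero_le_succ A B hkr
        _ = Z (k + 1) + (k + 1 : ℕ) := by push_cast; ring
  have hlast : Z (2 * m) ≤ A.natDegree + 1 :=
    encard_setOf_oddRpowDeriv_eq_zero_le_of_even (even_two_mul m) (by push_cast; linarith) hA
      (by omega)
  have hzero : {t : ℝ | sign t * |t| ^ r * A.eval t + B.eval t = 0} =
      {t | oddRpowDeriv r A B 0 t = 0} := by
    simp only [oddRpowDeriv_zero]
  rw [hzero]
  calc Z 0 ≤ Z (2 * m) + (2 * m : ℕ) := hchain _ le_rfl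
    _ ≤ (A.natDegree + 1 : ℕ) + (2 * m : ℕ) := by gcongr; exact_mod_cast hlast
    _ < (2 * (2 * m + 1) : ℕ) := by norm_cast; omega

end OddPower

namespace Lagrange

open Polynomial Finset

variable {F : Type*} [Field F] {ι : Type*} [DecidableEq ι] {s : Finset ι} {v : ι → F}

noncomputable def barycentricPoly (s : Finset ι) (v c : ι → F) : F[X] :=
  interpolate s v fun i => c i / nodalWeight s v i

theorem eval_barycentricPoly_not_at_node (hvs : Set.InjOn v s) (c : ι → F) {x : F}
    (hx : ∀ i ∈ s, x ≠ v i) :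
    (barycentricPoly s v c).eval x = (nodal s v).eval x * ∑ i ∈ s, c i / (x - v i) := by
  rw [barycentricPoly, eval_interpolate_not_at_node _ hx]
  congr 1
  refine sum_congr rfl fun i hi => ?_
  have := nodalWeight_ne_zero hvs hi
  field_simp

theorem eval_barycentricPoly_at_node (hvs : Set.InjOn v s) (c : ι → F) {i : ι} (hi : i ∈ s) :
    (barycentricPoly s v c).eval (v i) = c i / nodalWeight s v i :=
  eval_interpolate_at_node _ hvs hi

theorem barycentricPoly_ne_zero (hvs : Set.InjOn v s) {c : ι → F} {i : ι} (hi : i ∈ s)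
    (hc : c i ≠ 0) : barycentricPoly s v c ≠ 0 := fun h => by
  have := eval_barycentricPoly_at_node hvs c hi
  rw [h, eval_zero] at this
  exact div_ne_zero hc (nodalWeight_ne_zero hvs hi) this.symm

theorem natDegree_barycentricPoly_lt (hvs : Set.InjOn v s) (hs : s.Nonempty) (c : ι → F) :
    (barycentricPoly s v c).natDegree < #s :=
  (natDegree_le_of_degree_le (degree_interpolate_le _ hvs)).trans_lt
    (Nat.sub_lt hs.card_pos one_pos)

end Lagrange

section KwongType

open Polynomial Lagrange Finset SignType

theorem exists_sign_mul_abs_rpow_mul_add_eq_zero_of_mulVec_eq_zero {ι : Type*} [Fintype ι]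
    [DecidableEq ι] {p q : ι → ℝ} (hp : ∀ i, 0 < p i) (hq : ∀ j, 0 < q j)
    (hqinj : Function.Injective q) {r : ℝ} {c : ι → ℝ} (hc0 : c ≠ 0)
    (hc : Matrix.of (fun i j => (p i ^ r + q j ^ r) / (p i + q j)) *ᵥ c = 0) :
    ∃ A B : ℝ[X], A ≠ 0 ∧ A.natDegree < Fintype.card ι ∧ B.natDegree < Fintype.card ι ∧
      Set.range p ∪ Set.range (-q) ⊆ {t | sign t * |t| ^ r * A.eval t + B.eval t = 0} := by
  obtain ⟨j₀, hj₀⟩ := Function.ne_iff.1 hc0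
  have hx : Set.InjOn (-q) (univ : Finset ι) := (neg_injective.comp hqinj).injOn
  have hne : (univ : Finset ι).Nonempty := ⟨j₀, mem_univ _⟩
  refine ⟨barycentricPoly univ (-q) c, barycentricPoly univ (-q) fun j => q j ^ r * c j,
    barycentricPoly_ne_zero hx (mem_univ j₀) hj₀, natDegree_barycentricPoly_lt hx hne _,
    natDegree_barycentricPoly_lt hx hne _, Set.union_subset ?_ ?_⟩
  · rintro _ ⟨i, rfl⟩
    have hpx : ∀ j ∈ (univ : Finset ι), p i ≠ (-q) j := fun j _ => by
      rw [Pi.neg_apply]; linarith [hp i, hq j]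
    have hrow := congrFun hc i
    simp only [Matrix.mulVec, dotProduct, Matrix.of_apply, Pi.zero_apply] at hrow
    rw [Set.mem_ofPred_eq, eval_barycentricPoly_not_at_node hx _ hpx,
      eval_barycentricPoly_not_at_node hx _ hpx, sign_pos (hp i), abs_of_pos (hp i),
      SignType.coe_one, one_mul, mul_left_comm, ← mul_add, mul_sum, ← sum_add_distrib]
    calc _ = (nodal univ (-q)).eval (p i) * ∑ j, (p i ^ r + q j ^ r) / (p i + q j) * c j := by
          congr 1
          refine sum_congr rfl fun j _ => ?_
          rw [Pi.neg_apply, sub_neg_eq_add]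
          ring
      _ = 0 := by rw [hrow, mul_zero]
  · rintro _ ⟨j, rfl⟩
    rw [Set.mem_ofPred_eq, eval_barycentricPoly_at_node hx _ (mem_univ j),
      eval_barycentricPoly_at_node hx _ (mem_univ j), Pi.neg_apply,
      sign_neg (neg_neg_of_pos (hq j)), abs_neg, abs_of_pos (hq j), SignType.coe_neg,
      SignType.coe_one]
    ring

theorem det_rpow_add_rpow_div_add_ne_zero {ι : Type*} [Fintype ι] [DecidableEq ι]
    (hι : Odd (Fintype.card ι)) {p q : ι → ℝ} (hp : ∀ i, 0 < p i) (hq : ∀ j, 0 < q j)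
    (hpinj : Function.Injective p) (hqinj : Function.Injective q) {r : ℝ}
    (hr : (Fintype.card ι : ℝ) - 1 < r) :
    (Matrix.of fun i j => (p i ^ r + q j ^ r) / (p i + q j)).det ≠ 0 := by
  intro hdet
  obtain ⟨c, hc0, hc⟩ := Matrix.exists_mulVec_eq_zero_iff.2 hdet
  obtain ⟨A, B, hA, hAdeg, hBdeg, hzeros⟩ :=
    exists_sign_mul_abs_rpow_mul_add_eq_zero_of_mulVec_eq_zero hp hq hqinj hc0 hc
  have hdisj : Disjoint (Set.range p) (Set.range (-q)) :=
    Set.disjoint_left.2 fun t ⟨i, hi⟩ ⟨j, hj⟩ => by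
      rw [Pi.neg_apply] at hj; linarith [hp i, hq j]
  have hnqinj : Function.Injective (-q) := neg_injective.comp hqinj
  have hcard : (Set.range p ∪ Set.range (-q)).encard = 2 * Fintype.card ι := by
    rw [Set.encard_union_eq hdisj, ← Set.image_univ, ← Set.image_univ, hpinj.encard_image,
      hnqinj.encard_image, Set.encard_univ, ENat.card_eq_coe_fintype_card]
    ring
  refine (encard_setOf_sign_mul_abs_rpow_mul_add_eq_zero_lt hι hr hA hAdeg hBdeg).not_ge ?_
  exact hcard.symm.le.trans (Set.encard_le_encard hzeros)

end KwongType

/-- for `n` odd, `p` and `q` two `n`-tuples of distinct positive reals,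
and `r > n - 1`, the matrix `[(pᵢʳ + qⱼʳ)/(pᵢ + qⱼ)]` is nonsingular; in particular
the Kwong matrix `Kᵣ(p)` is nonsingular. -/
theorem kwong_type_matrix_nonsingular {n : ℕ} (hn : Odd n)
    (p q : Fin n → ℝ) (hppos : ∀ i, 0 < p i) (hqpos : ∀ i, 0 < q i)
    (hpinj : Function.Injective p) (hqinj : Function.Injective q)
    (r : ℝ) (hr : (n : ℝ) - 1 < r) :
    (Matrix.of fun i j : Fin n => (p i ^ r + q j ^ r) / (p i + q j)).det ≠ 0 ∧
    (kwong p r).det ≠ 0 := by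
  have hcard : Odd (Fintype.card (Fin n)) := by rwa [Fintype.card_fin]
  have hr' : (Fintype.card (Fin n) : ℝ) - 1 < r := by rwa [Fintype.card_fin]
  exact ⟨det_rpow_add_rpow_div_add_ne_zero hcard hppos hqpos hpinj hqinj hr',
    det_rpow_add_rpow_div_add_ne_zero hcard hppos hppos hpinj hpinj hr'⟩
end

section
/- Let p_1, ..., p_n be distinct positive real numbers and let r be a real number. Then K_r(p_1,...,p_n) = D^{r−1} E − D K_{r−2}(p_1,...,p_n) D + E D^{r−1}, where D = diag(p_1,...,p_n), D^{r−1} = diag(p_1^{r−1},...,p_n^{r−1}), and E is the n×n matrix all of whose entries are 1. -/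
open Matrix

/-- the identity `Kᵣ = Dʳ⁻¹ E - D Kᵣ₋₂ D + E Dʳ⁻¹`, where
`D = diag(p)`, `Dʳ⁻¹ = diag(pᵢʳ⁻¹)` and `E` is the all-ones matrix. -/
theorem kwong_recursion {n : ℕ} (p : Fin n → ℝ)
    (hpos : ∀ i, 0 < p i) (hinj : Function.Injective p) (r : ℝ) :
    kwong p r =
      Matrix.diagonal (fun i => p i ^ (r - 1)) * (Matrix.of fun _ _ : Fin n => (1 : ℝ)) -
        Matrix.diagonal p * kwong p (r - 2) * Matrix.diagonal p +
        (Matrix.of fun _ _ : Fin n => (1 : ℝ)) * Matrix.diagonal (fun i => p i ^ (r - 1)) := by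
  ext i j
  have hi := hpos i
  have hj := hpos j
  have hij : p i + p j ≠ 0 := by positivity
  simp only [kwong, Matrix.sub_apply, Matrix.add_apply, Matrix.diagonal_mul, Matrix.mul_diagonal,
    Matrix.of_apply]
  have e1 : p i ^ (r - 1) * p i = p i ^ r := by
    rw [← Real.rpow_add_one hi.ne', sub_add_cancel]
  have e2 : p j ^ (r - 1) * p j = p j ^ r := by
    rw [← Real.rpow_add_one hj.ne', sub_add_cancel]
  have e3 : p i ^ (r - 2) * p i = p i ^ (r - 1) := by
    rw [← Real.rpow_add_one hi.ne']; ring_nf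
  have e4 : p j ^ (r - 2) * p j = p j ^ (r - 1) := by
    rw [← Real.rpow_add_one hj.ne']; ring_nf
  field_simp
  nlinarith [e1, e2, e3, e4]
end

section
/- Let p_1, ..., p_n be distinct positive real numbers and let r be a real number with −1 < r < 1. Then the Kwong matrix K_r(p_1,...,p_n) is positive definite. -/
/-!
The Cauchy matrix `C = [1 / (p i + p j)]` is positive definite: it is the Gram matrix of the
functions `t ↦ exp (-p i * t)` in `L²(0, ∞)`, which are linearly independent because the rates
are distinct. This settles `r = 0`, where `K₀ = 2 C`, and the congruence
`Kᵣ = D K₋ᵣ D` with `D = diag (p i ^ r)` reduces `-1 < r < 0` to `0 < r < 1`.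

For `0 < r < 1`, Mathlib's integral representation `x ^ r = c⁻¹ ∫₀^∞ t ^ r (t⁻¹ - (t + x)⁻¹) dt`
(with `c > 0`) writes `c Kᵣ` as an integral over `t > 0` of the matrices
`[(g(p i) + g(p j)) / (p i + p j)]`, `g x = t ^ r (t⁻¹ - (t + x)⁻¹)`. Each of them is `t ^ r`
times the sum of a positive semidefinite rank-one matrix and `2 / t` times a diagonal congruent
of `C`, hence is positive definite.
-/

open Matrix

open MeasureTheory Real Set Filter Topology Function

section QuadraticForms

variable {ι : Type*} [Fintype ι]

lemma star_dotProduct_mulVec_eq_sum_sum (M : Matrix ι ι ℝ) (v : ι → ℝ) :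
    star v ⬝ᵥ (M *ᵥ v) = ∑ i, ∑ j, v i * v j * M i j := by
  simp only [dotProduct, mulVec, star_trivial, Finset.mul_sum]
  exact Finset.sum_congr rfl fun i _ => Finset.sum_congr rfl fun j _ => by ring

lemma Matrix.posDef_of_sum_sum_pos {M : Matrix ι ι ℝ} (hM : M.IsHermitian)
    (h : ∀ v : ι → ℝ, v ≠ 0 → 0 < ∑ i, ∑ j, v i * v j * M i j) : M.PosDef :=
  .of_dotProduct_mulVec_pos hM fun v hv => by
    simpa only [star_dotProduct_mulVec_eq_sum_sum] using h v hv

variable {α : Type*} [MeasurableSpace α] {μ : Measure α} {f : ι → ι → α → ℝ}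

lemma integrable_sum_sum (hf : ∀ i j, Integrable (f i j) μ) (v : ι → ℝ) :
    Integrable (fun x => ∑ i, ∑ j, v i * v j * f i j x) μ :=
  integrable_finsetSum _ fun i _ => integrable_finsetSum _ fun j _ => (hf i j).const_mul _

lemma integral_sum_sum (hf : ∀ i j, Integrable (f i j) μ) (v : ι → ℝ) :
    ∫ x, ∑ i, ∑ j, v i * v j * f i j x ∂μ = ∑ i, ∑ j, v i * v j * ∫ x, f i j x ∂μ := by
  rw [integral_finsetSum _ fun i _ => integrable_finsetSum _ fun j _ => (hf i j).const_mul _]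
  refine Finset.sum_congr rfl fun i _ => ?_
  rw [integral_finsetSum _ fun j _ => (hf i j).const_mul _]
  simp only [integral_const_mul]

end QuadraticForms

lemma setIntegral_Ioi_pos_of_eventually_pos {f : ℝ → ℝ} {a : ℝ} (hf : IntegrableOn f (Ioi a))
    (hf0 : ∀ t ∈ Ioi a, 0 ≤ f t) (hpos : ∀ᶠ t in atTop, 0 < f t) :
    0 < ∫ t in Ioi a, f t := by
  rw [setIntegral_pos_iff_support_of_nonneg_ae (ae_restrict_of_forall_mem measurableSet_Ioi hf0) hf]
  obtain ⟨T, hT⟩ := eventually_atTop.mp hpos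
  have hsub : Ioi (max T a) ⊆ support f ∩ Ioi a := fun t ht =>
    ⟨(hT t (le_max_left T a |>.trans ht.le)).ne', (le_max_right T a).trans_lt ht⟩
  calc (0 : ENNReal) < volume (Ioi (max T a)) := by simp
    _ ≤ _ := measure_mono hsub

section Cauchy

variable {ι : Type*} [Fintype ι] {p : ι → ℝ}

/-- The term of slowest decay dominates at infinity. -/
lemma eventually_sum_mul_exp_ne_zero (hinj : Injective p) {w : ι → ℝ} (hw : w ≠ 0) :
    ∀ᶠ t in atTop, ∑ i, w i * exp (-p i * t) ≠ 0 := by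
  classical
  obtain ⟨k, hk⟩ := Function.ne_iff.mp hw
  obtain ⟨m, hm, hmin⟩ :=
    (Finset.univ.filter (w · ≠ 0)).exists_min_image p ⟨k, by simpa using hk⟩
  have hwm : w m ≠ 0 := by simpa using hm
  have hlim : Tendsto (fun t => ∑ i, w i * exp ((p m - p i) * t)) atTop
      (𝓝 (∑ i, if i = m then w m else 0)) := by
    refine tendsto_finsetSum _ fun i _ => ?_
    by_cases him : i = m
    · subst him
      simp
    rcases eq_or_ne (w i) 0 with hwi | hwi
    · simp [hwi, him]
    have hlt : p m < p i := (hmin i (by simpa using hwi)).lt_of_ne (hinj.ne (Ne.symm him))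
    simpa [him] using (tendsto_exp_atBot.comp
      (tendsto_id.const_mul_atTop_of_neg (sub_neg.2 hlt))).const_mul (w i)
  rw [Finset.sum_ite_eq', if_pos (Finset.mem_univ m)] at hlim
  filter_upwards [hlim.eventually_ne hwm] with t ht
  have hfac : ∑ i, w i * exp (-p i * t) = exp (-p m * t) * ∑ i, w i * exp ((p m - p i) * t) := by
    rw [Finset.mul_sum]
    refine Finset.sum_congr rfl fun i _ => ?_
    rw [mul_left_comm, ← exp_add]
    congr 2
    ring
  rw [hfac]
  exact mul_ne_zero (exp_ne_zero _) ht

lemma sq_sum_mul_exp (w : ι → ℝ) (t : ℝ) :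
    (∑ i, w i * exp (-p i * t)) ^ 2 = ∑ i, ∑ j, w i * w j * exp (-(p i + p j) * t) := by
  rw [sq, Finset.sum_mul_sum]
  refine Finset.sum_congr rfl fun i _ => Finset.sum_congr rfl fun j _ => ?_
  rw [mul_mul_mul_comm, ← exp_add]
  congr 2
  ring

lemma sum_sum_mul_mul_inv_add_pos (hp : ∀ i, 0 < p i) (hinj : Injective p) {w : ι → ℝ}
    (hw : w ≠ 0) : 0 < ∑ i, ∑ j, w i * w j * (p i + p j)⁻¹ := by
  have hneg : ∀ i j, -(p i + p j) < 0 := fun i j => by linarith [hp i, hp j]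
  have hint : ∀ i j, IntegrableOn (fun t => exp (-(p i + p j) * t)) (Ioi 0) :=
    fun i j => integrableOn_exp_mul_Ioi (hneg i j) 0
  have hlaplace : ∀ i j, ∫ t in Ioi 0, exp (-(p i + p j) * t) = (p i + p j)⁻¹ := fun i j => by
    rw [integral_exp_mul_Ioi (hneg i j), mul_zero, exp_zero, neg_div_neg_eq, one_div]
  calc 0 < ∫ t in Ioi 0, (∑ i, w i * exp (-p i * t)) ^ 2 := by
        refine setIntegral_Ioi_pos_of_eventually_pos ?_ (fun t _ => sq_nonneg _)
          ((eventually_sum_mul_exp_ne_zero hinj hw).mono fun t ht => by positivity)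
        simp only [sq_sum_mul_exp]
        exact integrable_sum_sum hint w
    _ = _ := by simp only [sq_sum_mul_exp, integral_sum_sum hint, hlaplace]

noncomputable def cauchyMatrix (p : ι → ℝ) : Matrix ι ι ℝ :=
  of fun i j => (p i + p j)⁻¹

lemma cauchyMatrix_posDef (hp : ∀ i, 0 < p i) (hinj : Injective p) :
    (cauchyMatrix p).PosDef := by
  refine Matrix.posDef_of_sum_sum_pos ?_ fun w hw => sum_sum_mul_mul_inv_add_pos hp hinj hw
  ext i j
  simp [cauchyMatrix, add_comm]

end Cauchy

section Kwong

variable {n : ℕ} {p : Fin n → ℝ}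

lemma kwong_zero : kwong p 0 = (2 : ℝ) • cauchyMatrix p := by
  ext i j
  simp only [kwong, cauchyMatrix, Matrix.smul_apply, of_apply, rpow_zero, smul_eq_mul]
  ring

lemma kwong_eq_diagonal_mul_kwong_neg_mul_diagonal (hp : ∀ i, 0 < p i) (r : ℝ) :
    kwong p r = diagonal (fun i => p i ^ r) * kwong p (-r) * diagonal (fun i => p i ^ r) := by
  ext i j
  have hi := (rpow_pos_of_pos (hp i) r).ne'
  have hj := (rpow_pos_of_pos (hp j) r).ne'
  simp only [kwong, diagonal_mul, mul_diagonal, of_apply, rpow_neg (hp i).le, rpow_neg (hp j).le]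
  field_simp
  ring

lemma kwong_posDef_iff_neg (hp : ∀ i, 0 < p i) (r : ℝ) :
    (kwong p r).PosDef ↔ (kwong p (-r)).PosDef := by
  have hD : IsUnit (diagonal fun i => p i ^ r) :=
    isUnit_diagonal.2 (Pi.isUnit_iff.2 fun i => (rpow_pos_of_pos (hp i) r).ne'.isUnit)
  have hstar : star (diagonal fun i => p i ^ r) = diagonal fun i => p i ^ r := by
    rw [star_eq_conjTranspose, diagonal_conjTranspose, star_trivial]
  rw [kwong_eq_diagonal_mul_kwong_neg_mul_diagonal hp r]
  nth_rw 1 [← hstar]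
  exact hD.posDef_star_left_conjugate_iff

lemma rpowIntegrand₀₁_add_div_add (r : ℝ) {t a b : ℝ} (ht : 0 < t) (ha : 0 < a) (hb : 0 < b) :
    (rpowIntegrand₀₁ r t a + rpowIntegrand₀₁ r t b) / (a + b) =
      t ^ r * ((t + a)⁻¹ * (t + b)⁻¹ + 2 / t * ((a / (t + a)) * (b / (t + b)) * (a + b)⁻¹)) := by
  unfold rpowIntegrand₀₁
  field_simp
  ring

lemma sum_sum_rpowIntegrand₀₁_pos (hp : ∀ i, 0 < p i) (hinj : Injective p) (r : ℝ) {t : ℝ}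
    (ht : 0 < t) {v : Fin n → ℝ} (hv : v ≠ 0) :
    0 < ∑ i, ∑ j, v i * v j *
      ((rpowIntegrand₀₁ r t (p i) + rpowIntegrand₀₁ r t (p j)) / (p i + p j)) := by
  set u : Fin n → ℝ := fun i => v i / (t + p i)
  set w : Fin n → ℝ := fun i => v i * (p i / (t + p i))
  have hw : w ≠ 0 := by
    obtain ⟨k, hk⟩ := Function.ne_iff.mp hv
    exact Function.ne_iff.mpr ⟨k, mul_ne_zero hk (by have := hp k; positivity)⟩
  have hexpand : ∑ i, ∑ j, v i * v j *
      ((rpowIntegrand₀₁ r t (p i) + rpowIntegrand₀₁ r t (p j)) / (p i + p j)) =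
      t ^ r * ((∑ i, u i) ^ 2 + 2 / t * ∑ i, ∑ j, w i * w j * (p i + p j)⁻¹) := by
    rw [sq, Finset.sum_mul_sum, Finset.mul_sum, ← Finset.sum_add_distrib, Finset.mul_sum]
    refine Finset.sum_congr rfl fun i _ => ?_
    rw [Finset.mul_sum, ← Finset.sum_add_distrib, Finset.mul_sum]
    refine Finset.sum_congr rfl fun j _ => ?_
    rw [rpowIntegrand₀₁_add_div_add r ht (hp i) (hp j)]
    ring
  rw [hexpand]
  exact mul_pos (rpow_pos_of_pos ht r) (add_pos_of_nonneg_of_pos (sq_nonneg _)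
    (mul_pos (by positivity) (sum_sum_mul_mul_inv_add_pos hp hinj hw)))

lemma kwong_posDef_of_pos (hp : ∀ i, 0 < p i) (hinj : Injective p) {r : ℝ} (hr0 : 0 < r)
    (hr1 : r < 1) : (kwong p r).PosDef := by
  refine Matrix.posDef_of_sum_sum_pos (kwong_isHermitian p r) fun v hv => ?_
  have hr : r ∈ Ioo 0 1 := ⟨hr0, hr1⟩
  set c := ∫ t in Ioi 0, rpowIntegrand₀₁ r t 1
  have hint : ∀ i j, IntegrableOn
      (fun t => (rpowIntegrand₀₁ r t (p i) + rpowIntegrand₀₁ r t (p j)) / (p i + p j)) (Ioi 0) :=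
    fun i j => ((integrableOn_rpowIntegrand₀₁_Ioi hr (hp i).le).add
      (integrableOn_rpowIntegrand₀₁_Ioi hr (hp j).le)).div_const _
  have hrep : ∀ i j, ∫ t in Ioi 0,
      (rpowIntegrand₀₁ r t (p i) + rpowIntegrand₀₁ r t (p j)) / (p i + p j) =
      kwong p r i j * c := fun i j => by
    rw [integral_div, integral_add (integrableOn_rpowIntegrand₀₁_Ioi hr (hp i).le)
      (integrableOn_rpowIntegrand₀₁_Ioi hr (hp j).le),
      integral_rpowIntegrand₀₁_eq_rpow_mul_const hr (hp i).le,
      integral_rpowIntegrand₀₁_eq_rpow_mul_const hr (hp j).le]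
    simp only [kwong, of_apply]
    ring
  refine pos_of_mul_pos_left ?_ (integral_rpowIntegrand₀₁_one_pos hr).le
  calc 0 < ∫ t in Ioi 0, ∑ i, ∑ j, v i * v j *
        ((rpowIntegrand₀₁ r t (p i) + rpowIntegrand₀₁ r t (p j)) / (p i + p j)) :=
        setIntegral_Ioi_pos_of_eventually_pos (integrable_sum_sum hint v)
          (fun t ht => (sum_sum_rpowIntegrand₀₁_pos hp hinj r ht hv).le)
          ((eventually_gt_atTop 0).mono fun t ht => sum_sum_rpowIntegrand₀₁_pos hp hinj r ht hv)
    _ = (∑ i, ∑ j, v i * v j * kwong p r i j) * c := by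
        simp only [integral_sum_sum hint, hrep, ← mul_assoc, Finset.sum_mul]

end Kwong

/-- for distinct positive `p i` and `-1 < r < 1`, the Kwong matrix
`Kᵣ` is positive definite. -/
theorem kwong_posDef {n : ℕ} (p : Fin n → ℝ)
    (hpos : ∀ i, 0 < p i) (hinj : Function.Injective p)
    (r : ℝ) (hr1 : -1 < r) (hr2 : r < 1) :
    (kwong p r).PosDef := by
  rcases lt_trichotomy r 0 with hr | rfl | hr
  · exact (kwong_posDef_iff_neg hpos r).2
      (kwong_posDef_of_pos hpos hinj (neg_pos.2 hr) (by linarith))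
  · rw [kwong_zero]
    exact (cauchyMatrix_posDef hpos hinj).smul two_pos
  · exact kwong_posDef_of_pos hpos hinj hr hr2
end

section
/- Let p_1, ..., p_n be distinct positive real numbers and let r be a real number with 1 < r < 3. Then the Kwong matrix K_r(p_1,...,p_n) is strictly conditionally negative definite: for every nonzero real vector x with Σ_{i=1}^n x_i = 0, one has ⟨x, K_r x⟩ < 0. -/
open Matrix

section KwongAux

open MeasureTheory Real Set Filter

lemma exp_integral {a : ℝ} (ha : 0 < a) :
    ∫ t in Ioi (0:ℝ), Real.exp (-(a*t)) = 1/a := by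
  have h := integral_comp_mul_left_Ioi (fun x => Real.exp (-x)) 0 ha
  simp only [mul_zero, integral_exp_neg_Ioi_zero, smul_eq_mul, mul_one] at h
  rw [h, one_div]

lemma exp_integrable {a : ℝ} (ha : 0 < a) :
    IntegrableOn (fun t : ℝ => Real.exp (-(a*t))) (Ioi (0:ℝ)) := by
  simpa [neg_mul] using exp_neg_integrableOn_Ioi 0 ha

/-- A nonzero combination of exponentials with distinct rates is nonzero somewhere on `(0,∞)`. -/
lemma exp_comb_ne_zero {n : ℕ} (p : Fin n → ℝ) (hinj : Function.Injective p)
    (w : Fin n → ℝ) (hw : w ≠ 0) :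
    ∃ t : ℝ, 0 < t ∧ (∑ i, w i * Real.exp (-(p i * t))) ≠ 0 := by
  obtain ⟨i0, hi0⟩ : ∃ i, w i ≠ 0 := by
    by_contra h; push_neg at h; exact hw (funext h)
  set S : Finset (Fin n) := Finset.univ.filter (fun i => w i ≠ 0) with hS
  have hSne : S.Nonempty := ⟨i0, by simp [hS, hi0]⟩
  obtain ⟨k, hkS, hk⟩ := S.exists_min_image p hSne
  have hwk : w k ≠ 0 := by simpa [hS] using hkS
  -- h t := exp (p k * t) * g t  tends to w k
  have key : Tendsto (fun t : ℝ => ∑ i, w i * Real.exp ((p k - p i) * t)) atTop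
      (nhds (w k)) := by
    have : Tendsto (fun t : ℝ => w k + ∑ i ∈ Finset.univ.erase k,
        w i * Real.exp ((p k - p i) * t)) atTop (nhds (w k + 0)) := by
      refine Tendsto.add tendsto_const_nhds ?_
      have h0 : (0:ℝ) = ∑ i ∈ Finset.univ.erase k, (0:ℝ) := by simp
      rw [h0]
      refine tendsto_finset_sum _ (fun i hi => ?_)
      rcases eq_or_ne (w i) 0 with h | h
      · simpa [h] using (tendsto_const_nhds : Tendsto (fun _ : ℝ => (0:ℝ)) atTop (nhds 0))
      · have hiS : i ∈ S := by simp [hS, h]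
        have hik : i ≠ k := (Finset.mem_erase.mp hi).1
        have hlt : p k < p i := lt_of_le_of_ne (hk i hiS) (fun he => hik (hinj he.symm))
        have h2 : Tendsto (fun t : ℝ => (p k - p i) * t) atTop atBot :=
          Tendsto.const_mul_atTop_of_neg (by linarith) tendsto_id
        have h1 : Tendsto (fun t : ℝ => Real.exp ((p k - p i) * t)) atTop (nhds 0) :=
          Real.tendsto_exp_atBot.comp h2
        simpa using h1.const_mul (w i)
    have heq : ∀ t : ℝ, w k + ∑ i ∈ Finset.univ.erase k, w i * Real.exp ((p k - p i) * t)
        = ∑ i, w i * Real.exp ((p k - p i) * t) := by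
      intro t
      rw [← Finset.add_sum_erase Finset.univ _ (Finset.mem_univ k)]
      simp
    simpa [heq] using this
  -- from the limit, find a point where nonzero
  have hne : ∀ᶠ t in atTop, (∑ i, w i * Real.exp ((p k - p i) * t)) ≠ 0 := by
    have := key.eventually_ne hwk
    exact this
  obtain ⟨t, ht0, htne⟩ : ∃ t : ℝ, 0 < t ∧ (∑ i, w i * Real.exp ((p k - p i) * t)) ≠ 0 := by
    rcases (hne.and (eventually_gt_atTop 0)).exists with ⟨t, h1, h2⟩
    exact ⟨t, h2, h1⟩
  refine ⟨t, ht0, fun hzero => htne ?_⟩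
  have : (∑ i, w i * Real.exp (-(p i * t))) * Real.exp (p k * t) = 0 := by rw [hzero]; ring
  rw [Finset.sum_mul] at this
  have heq2 : ∀ i, w i * Real.exp (-(p i * t)) * Real.exp (p k * t)
      = w i * Real.exp ((p k - p i) * t) := by
    intro i
    rw [mul_assoc, ← Real.exp_add]
    ring_nf
  rw [Finset.sum_congr rfl (fun i _ => heq2 i)] at this
  exact this

/-- Strict positivity of the Cauchy-matrix quadratic form. -/
lemma cauchy_pos {n : ℕ} (p : Fin n → ℝ) (hpos : ∀ i, 0 < p i)
    (hinj : Function.Injective p) (w : Fin n → ℝ) (hw : w ≠ 0) :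
    0 < ∑ i, ∑ j, w i * w j / (p i + p j) := by
  set g : ℝ → ℝ := fun t => ∑ i, w i * Real.exp (-(p i * t)) with hg
  have hgcont : Continuous g := by
    apply continuous_finset_sum
    intro i _
    exact continuous_const.mul (Real.continuous_exp.comp (continuous_const.mul continuous_id).neg)
  have hsq : ∀ t : ℝ, (g t)^2 = ∑ i, ∑ j, w i * w j * Real.exp (-((p i + p j) * t)) := by
    intro t
    rw [hg, sq, Finset.sum_mul_sum]
    refine Finset.sum_congr rfl fun i _ => Finset.sum_congr rfl fun j _ => ?_
    rw [mul_mul_mul_comm, ← Real.exp_add]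
    ring_nf
  have hint : ∀ i j : Fin n, IntegrableOn
      (fun t : ℝ => w i * w j * Real.exp (-((p i + p j) * t))) (Ioi (0:ℝ)) :=
    fun i j => (exp_integrable (by have := hpos i; have := hpos j; linarith)).const_mul _
  have hgsq_int : IntegrableOn (fun t => (g t)^2) (Ioi (0:ℝ)) := by
    have : IntegrableOn (fun t : ℝ => ∑ i, ∑ j, w i * w j * Real.exp (-((p i + p j) * t)))
        (Ioi (0:ℝ)) :=
      integrable_finset_sum _ (fun i _ => integrable_finset_sum _ (fun j _ => hint i j))
    exact this.congr_fun (fun t _ => (hsq t).symm) measurableSet_Ioi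
  have hval : ∑ i, ∑ j, w i * w j / (p i + p j) = ∫ t in Ioi (0:ℝ), (g t)^2 := by
    have h1 : ∀ i j : Fin n, w i * w j / (p i + p j)
        = ∫ t in Ioi (0:ℝ), w i * w j * Real.exp (-((p i + p j) * t)) := by
      intro i j
      rw [MeasureTheory.integral_const_mul, exp_integral (by have := hpos i; have := hpos j; linarith)]
      ring
    calc ∑ i, ∑ j, w i * w j / (p i + p j)
        = ∑ i, ∑ j, ∫ t in Ioi (0:ℝ), w i * w j * Real.exp (-((p i + p j) * t)) := by
          exact Finset.sum_congr rfl fun i _ => Finset.sum_congr rfl fun j _ => h1 i j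
      _ = ∫ t in Ioi (0:ℝ), ∑ i, ∑ j, w i * w j * Real.exp (-((p i + p j) * t)) := by
          rw [MeasureTheory.integral_finset_sum _ (fun i _ => integrable_finset_sum _ (fun j _ => hint i j))]
          exact Finset.sum_congr rfl fun i _ =>
            (MeasureTheory.integral_finset_sum _ (fun j _ => hint i j)).symm
      _ = ∫ t in Ioi (0:ℝ), (g t)^2 := by
          refine setIntegral_congr_fun measurableSet_Ioi (fun t _ => (hsq t).symm)
  rw [hval]
  rw [setIntegral_pos_iff_support_of_nonneg_ae
    (Filter.Eventually.of_forall (fun t => sq_nonneg (g t))) hgsq_int]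
  obtain ⟨t0, ht0, hgt0⟩ := exp_comb_ne_zero p hinj w hw
  have hopen : IsOpen ({t : ℝ | g t ≠ 0} ∩ Ioi 0) :=
    (isOpen_ne.preimage hgcont).inter isOpen_Ioi
  have hsub : ({t : ℝ | g t ≠ 0} ∩ Ioi 0) ⊆ Function.support (fun t => (g t)^2) ∩ Ioi 0 := by
    rintro t ⟨h1, h2⟩
    exact ⟨by simp [Function.mem_support, pow_eq_zero_iff]; exact h1, h2⟩
  have hne : ({t : ℝ | g t ≠ 0} ∩ Ioi 0).Nonempty := ⟨t0, hgt0, ht0⟩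
  exact lt_of_lt_of_le (hopen.measure_pos volume hne) (measure_mono hsub)

lemma kernel_meas (s t : ℝ) : Measurable (fun l : ℝ => l ^ (s-1) * (t/(t+l))) :=
  (measurable_id.pow_const (s-1)).mul
    (measurable_const.div (measurable_const.add measurable_id))

lemma kernel_integrable {s : ℝ} (hs0 : 0 < s) (hs1 : s < 1) {t : ℝ} (ht : 0 < t) :
    IntegrableOn (fun l : ℝ => l ^ (s-1) * (t/(t+l))) (Ioi (0:ℝ)) := by
  rw [← Ioc_union_Ioi_eq_Ioi (zero_le_one (α := ℝ))]
  refine IntegrableOn.union ?_ ?_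
  · -- on (0,1]: dominated by l ^ (s-1)
    have hg : IntegrableOn (fun l : ℝ => l ^ (s-1)) (Ioc (0:ℝ) 1) := by
      have := intervalIntegral.intervalIntegrable_rpow' (a := 0) (b := 1) (by linarith : (-1:ℝ) < s-1)
      rwa [intervalIntegrable_iff_integrableOn_Ioc_of_le zero_le_one] at this
    refine hg.mono' ((kernel_meas s t).aestronglyMeasurable.restrict) ?_
    refine (ae_restrict_iff' measurableSet_Ioc).mpr (Eventually.of_forall fun l hl => ?_)
    have hl0 : 0 < l := hl.1
    have h1 : 0 ≤ t/(t+l) := by positivity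
    have h2 : t/(t+l) ≤ 1 := by
      rw [div_le_one (by linarith)]; linarith
    have h3 : 0 ≤ l ^ (s-1) := (rpow_nonneg hl0.le _)
    rw [Real.norm_eq_abs, abs_of_nonneg (by positivity)]
    calc l ^ (s-1) * (t/(t+l)) ≤ l ^ (s-1) * 1 := by
          exact mul_le_mul_of_nonneg_left h2 h3
      _ = l ^ (s-1) := mul_one _
  · -- on (1,∞): dominated by t * l ^ (s-2)
    have hg : IntegrableOn (fun l : ℝ => t * l ^ (s-2)) (Ioi (1:ℝ)) :=
      (integrableOn_Ioi_rpow_of_lt (by linarith) one_pos).const_mul t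
    refine hg.mono' ((kernel_meas s t).aestronglyMeasurable.restrict) ?_
    refine (ae_restrict_iff' measurableSet_Ioi).mpr (Eventually.of_forall fun l hl => ?_)
    have hl1 : (1:ℝ) < l := hl
    have hl0 : 0 < l := by linarith
    have h2 : t/(t+l) ≤ t/l := by
      apply div_le_div_of_nonneg_left ht.le hl0; linarith
    have h3 : 0 ≤ l ^ (s-1) := rpow_nonneg hl0.le _
    rw [Real.norm_eq_abs, abs_of_nonneg (by positivity)]
    calc l ^ (s-1) * (t/(t+l)) ≤ l ^ (s-1) * (t/l) :=
          mul_le_mul_of_nonneg_left h2 h3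
      _ = t * l ^ (s-2) := by
          have h7 : l ^ (s-2) = l ^ (s-1) / l := by
            rw [show s - 2 = (s-1) - 1 by ring, Real.rpow_sub hl0, Real.rpow_one]
          rw [h7, div_eq_mul_inv, div_eq_mul_inv, mul_comm t l⁻¹, ← mul_assoc,
            mul_comm t, mul_assoc]
  
lemma kernel_integral {s : ℝ} (hs0 : 0 < s) (hs1 : s < 1) {t : ℝ} (ht : 0 < t) :
    ∫ l in Ioi (0:ℝ), l ^ (s-1) * (t/(t+l))
      = t ^ s * ∫ l in Ioi (0:ℝ), l ^ (s-1) * (1/(1+l)) := by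
  have h := integral_comp_mul_left_Ioi (fun l : ℝ => l ^ (s-1) * (t/(t+l))) 0 ht
  rw [mul_zero] at h
  have heq : EqOn (fun u : ℝ => (t*u) ^ (s-1) * (t/(t+t*u)))
      (fun l : ℝ => t ^ (s-1) * (l ^ (s-1) * (1/(1+l)))) (Ioi (0:ℝ)) := by
    intro l hl
    have hl0 : (0:ℝ) < l := hl
    simp only []
    rw [Real.mul_rpow ht.le hl0.le]
    have h5 : t/(t+t*l) = 1/(1+l) := by
      rw [show t + t*l = t*(1+l) by ring]
      rw [div_eq_div_iff (by positivity) (by positivity)]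
      ring
    rw [h5]; ring
  rw [setIntegral_congr_fun measurableSet_Ioi heq, MeasureTheory.integral_const_mul,
    smul_eq_mul] at h
  have h2 : ∫ l in Ioi (0:ℝ), l ^ (s-1) * (t/(t+l))
      = t * (t ^ (s-1) * ∫ l in Ioi (0:ℝ), l ^ (s-1) * (1/(1+l))) := by
    rw [h, ← mul_assoc, mul_inv_cancel₀ ht.ne', one_mul]
  have hts : t ^ s = t * t ^ (s-1) := by
    have h9 := Real.rpow_add ht 1 (s-1)
    rw [Real.rpow_one, show (1:ℝ) + (s-1) = s by ring] at h9
    exact h9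
  rw [h2, ← mul_assoc, ← hts]

lemma const_pos {s : ℝ} (hs0 : 0 < s) (hs1 : s < 1) :
    0 < ∫ l in Ioi (0:ℝ), l ^ (s-1) * (1/(1+l)) := by
  have hint : IntegrableOn (fun l : ℝ => l ^ (s-1) * (1/(1+l))) (Ioi (0:ℝ)) :=
    kernel_integrable hs0 hs1 one_pos
  rw [setIntegral_pos_iff_support_of_nonneg_ae
    ((ae_restrict_iff' measurableSet_Ioi).mpr (Eventually.of_forall fun l hl => by
      have : (0:ℝ) < l := hl
      positivity)) hint]
  have hsub : Ioi (0:ℝ) ⊆ Function.support (fun l : ℝ => l ^ (s-1) * (1/(1+l))) ∩ Ioi 0 := by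
    intro l hl
    have hl0 : (0:ℝ) < l := hl
    refine ⟨?_, hl⟩
    simp only [Function.mem_support]
    positivity
  calc (0:ENNReal) < volume (Ioi (0:ℝ)) := by rw [Real.volume_Ioi]; exact ENNReal.zero_lt_top
    _ ≤ _ := measure_mono hsub

/-- The quadratic form of the matrix `[(pᵢ^s+pⱼ^s)/(pᵢ+pⱼ)]` is strictly positive
for `0 < s < 1`. -/
lemma ks_pos_aux {n : ℕ} (p : Fin n → ℝ) (hpos : ∀ i, 0 < p i)
    (hinj : Function.Injective p) {s : ℝ} (hs0 : 0 < s) (hs1 : s < 1)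
    (y : Fin n → ℝ) (hy : y ≠ 0) :
    0 < ∑ i, ∑ j, y i * y j * ((p i ^ s + p j ^ s)/(p i + p j)) := by
  set c : ℝ := ∫ l in Ioi (0:ℝ), l ^ (s-1) * (1/(1+l)) with hc_def
  have hc : 0 < c := const_pos hs0 hs1
  set G : Fin n → ℝ → ℝ := fun i l => l ^ (s-1) * (p i/(p i + l)) with hG_def
  have hGint : ∀ i, IntegrableOn (G i) (Ioi (0:ℝ)) :=
    fun i => kernel_integrable hs0 hs1 (hpos i)
  have hGval : ∀ i, ∫ l in Ioi (0:ℝ), G i l = p i ^ s * c :=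
    fun i => kernel_integral hs0 hs1 (hpos i)
  set F : Fin n → Fin n → ℝ → ℝ :=
    fun i j l => y i * y j / (p i + p j) * (G i l + G j l) with hF_def
  have hPij : ∀ i j, (0:ℝ) < p i + p j := fun i j => by have := hpos i; have := hpos j; linarith
  have hFint : ∀ i j, IntegrableOn (F i j) (Ioi (0:ℝ)) :=
    fun i j => ((hGint i).add (hGint j)).const_mul _
  have hFval : ∀ i j, ∫ l in Ioi (0:ℝ), F i j l
      = c * (y i * y j * ((p i ^ s + p j ^ s)/(p i + p j))) := by
    intro i j
    rw [hF_def]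
    simp only []
    rw [MeasureTheory.integral_const_mul,
      MeasureTheory.integral_add (hGint i) (hGint j), hGval i, hGval j]
    field_simp
  have hswap : c * (∑ i, ∑ j, y i * y j * ((p i ^ s + p j ^ s)/(p i + p j)))
      = ∫ l in Ioi (0:ℝ), ∑ i, ∑ j, F i j l := by
    rw [MeasureTheory.integral_finset_sum _
      (fun i _ => integrable_finset_sum _ (fun j _ => hFint i j))]
    rw [Finset.mul_sum]
    refine Finset.sum_congr rfl fun i _ => ?_
    rw [MeasureTheory.integral_finset_sum _ (fun j _ => hFint i j), Finset.mul_sum]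
    exact Finset.sum_congr rfl fun j _ => (hFval i j).symm
  -- pointwise positivity of the integrand
  obtain ⟨i0, hi0⟩ : ∃ i, y i ≠ 0 := by
    by_contra h; push_neg at h; exact hy (funext h)
  have hHpos : ∀ l ∈ Ioi (0:ℝ), 0 < ∑ i, ∑ j, F i j l := by
    intro l hl
    have hl0 : (0:ℝ) < l := hl
    set w : Fin n → ℝ := fun i => y i * p i / (p i + l) with hw_def
    have hw : w ≠ 0 := by
      intro h
      have := congrFun h i0
      rw [hw_def] at this
      simp only [Pi.zero_apply] at this
      exact (div_ne_zero (mul_ne_zero hi0 (hpos i0).ne') (by have := hpos i0; linarith)) this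
    have hpt : ∀ i j, F i j l
        = l ^ (s-1) * (l * ((y i/(p i+l)) * (y j/(p j+l)))
            + 2 * (w i * w j / (p i + p j))) := by
      intro i j
      rw [hF_def, hG_def, hw_def]
      simp only []
      have h1 : p i + l ≠ 0 := by have := hpos i; linarith
      have h2 : p j + l ≠ 0 := by have := hpos j; linarith
      have h3 : p i + p j ≠ 0 := (hPij i j).ne'
      field_simp
      ring
    have hsum : ∑ i, ∑ j, F i j l
        = l ^ (s-1) * (l * (∑ i, y i/(p i+l))^2
            + 2 * ∑ i, ∑ j, w i * w j / (p i + p j)) := by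
      rw [sq, Finset.sum_mul_sum]
      rw [Finset.mul_sum, Finset.mul_sum, ← Finset.sum_add_distrib, Finset.mul_sum]
      refine Finset.sum_congr rfl fun i _ => ?_
      rw [Finset.mul_sum, Finset.mul_sum, ← Finset.sum_add_distrib, Finset.mul_sum]
      exact Finset.sum_congr rfl fun j _ => hpt i j
    rw [hsum]
    have hcau : 0 < ∑ i, ∑ j, w i * w j / (p i + p j) := cauchy_pos p hpos hinj w hw
    have hrp : (0:ℝ) < l ^ (s-1) := rpow_pos_of_pos hl0 _
    have hsq : (0:ℝ) ≤ l * (∑ i, y i/(p i+l))^2 := by positivity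
    nlinarith
  -- conclude
  have hint : 0 < ∫ l in Ioi (0:ℝ), ∑ i, ∑ j, F i j l := by
    have hintg : IntegrableOn (fun l => ∑ i, ∑ j, F i j l) (Ioi (0:ℝ)) :=
      integrable_finset_sum _ (fun i _ => integrable_finset_sum _ (fun j _ => hFint i j))
    rw [setIntegral_pos_iff_support_of_nonneg_ae
      ((ae_restrict_iff' measurableSet_Ioi).mpr
        (Eventually.of_forall fun l hl => (hHpos l hl).le)) hintg]
    have hsub : Ioi (0:ℝ) ⊆ Function.support (fun l => ∑ i, ∑ j, F i j l) ∩ Ioi 0 :=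
      fun l hl => ⟨fun h => (hHpos l hl).ne' h, hl⟩
    calc (0:ENNReal) < volume (Ioi (0:ℝ)) := by rw [Real.volume_Ioi]; exact ENNReal.zero_lt_top
      _ ≤ _ := measure_mono hsub
  rw [← hswap] at hint
  by_contra hQ
  push_neg at hQ
  nlinarith

/-- The quadratic form of the matrix `[(pᵢ^s+pⱼ^s)/(pᵢ+pⱼ)]` is strictly positive
for `-1 < s < 1`. -/
lemma ks_pos {n : ℕ} (p : Fin n → ℝ) (hpos : ∀ i, 0 < p i)
    (hinj : Function.Injective p) {s : ℝ} (hs0 : -1 < s) (hs1 : s < 1)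
    (y : Fin n → ℝ) (hy : y ≠ 0) :
    0 < ∑ i, ∑ j, y i * y j * ((p i ^ s + p j ^ s)/(p i + p j)) := by
  rcases lt_trichotomy s 0 with h | h | h
  · -- reduce to -s via conjugation
    set z : Fin n → ℝ := fun i => y i * p i ^ s with hz_def
    have hz : z ≠ 0 := by
      obtain ⟨i0, hi0⟩ : ∃ i, y i ≠ 0 := by
        by_contra hcon; push_neg at hcon; exact hy (funext hcon)
      intro hcon
      have := congrFun hcon i0
      rw [hz_def] at this
      simp only [Pi.zero_apply] at this
      exact (mul_ne_zero hi0 (rpow_pos_of_pos (hpos i0) s).ne') this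
    have key : ∀ i j : Fin n, y i * y j * ((p i ^ s + p j ^ s)/(p i + p j))
        = z i * z j * ((p i ^ (-s) + p j ^ (-s))/(p i + p j)) := by
      intro i j
      rw [hz_def]
      simp only []
      rw [Real.rpow_neg (hpos i).le, Real.rpow_neg (hpos j).le]
      have h1 : p i ^ s ≠ 0 := (rpow_pos_of_pos (hpos i) s).ne'
      have h2 : p j ^ s ≠ 0 := (rpow_pos_of_pos (hpos j) s).ne'
      have h3 : p i + p j ≠ 0 := by have := hpos i; have := hpos j; linarith
      field_simp
      ring
    rw [Finset.sum_congr rfl fun i _ => Finset.sum_congr rfl fun j _ => key i j]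
    exact ks_pos_aux p hpos hinj (by linarith) (by linarith) z hz
  · -- s = 0 : twice the Cauchy form
    subst h
    have key : ∀ i j : Fin n, y i * y j * ((p i ^ (0:ℝ) + p j ^ (0:ℝ))/(p i + p j))
        = 2 * (y i * y j / (p i + p j)) := by
      intro i j
      rw [Real.rpow_zero, Real.rpow_zero]
      ring
    rw [Finset.sum_congr rfl fun i _ => Finset.sum_congr rfl fun j _ => key i j]
    have : ∑ i, ∑ j, 2 * (y i * y j / (p i + p j))
        = 2 * ∑ i, ∑ j, y i * y j / (p i + p j) := by
      rw [Finset.mul_sum]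
      exact Finset.sum_congr rfl fun i _ => (Finset.mul_sum _ _ _).symm
    rw [this]
    have := cauchy_pos p hpos hinj y hy
    linarith
  · exact ks_pos_aux p hpos hinj h hs1 y hy

/-- Pointwise identity used to reduce the Kwong form to the `r-2` form. -/
lemma kwong_pointwise {a b : ℝ} (r : ℝ) (ha : 0 < a) (hb : 0 < b) :
    (a ^ r + b ^ r)/(a + b)
      = (a ^ (r-1) + b ^ (r-1)) - a * b * ((a ^ (r-2) + b ^ (r-2))/(a + b)) := by
  have h2 : ∀ x : ℝ, 0 < x → x ^ ((2:ℝ)) = x * x := by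
    intro x hx
    rw [show (2:ℝ) = ((2:ℕ):ℝ) by norm_num, Real.rpow_natCast]
    ring
  have ha1 : a ^ (r-1) = a ^ r / a := by rw [Real.rpow_sub ha, Real.rpow_one]
  have hb1 : b ^ (r-1) = b ^ r / b := by rw [Real.rpow_sub hb, Real.rpow_one]
  have ha2 : a ^ (r-2) = a ^ r / (a * a) := by rw [Real.rpow_sub ha, h2 a ha]
  have hb2 : b ^ (r-2) = b ^ r / (b * b) := by rw [Real.rpow_sub hb, h2 b hb]
  rw [ha1, hb1, ha2, hb2]
  have hab : a + b ≠ 0 := by linarith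
  field_simp
  ring

end KwongAux


/-- for distinct positive `p i` and `1 < r < 3`, the Kwong matrix
`Kᵣ` is strictly conditionally negative definite: `⟨x, Kᵣ x⟩ < 0` for every nonzero
real vector `x` with `Σᵢ xᵢ = 0`. -/

theorem kwong_conditionally_negative {n : ℕ} (p : Fin n → ℝ)
    (hpos : ∀ i, 0 < p i) (hinj : Function.Injective p)
    (r : ℝ) (hr1 : 1 < r) (hr2 : r < 3) :
    ∀ x : Fin n → ℝ, x ≠ 0 → ∑ i, x i = 0 → x ⬝ᵥ (kwong p r).mulVec x < 0 := by
  intro x hx hsum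
  have hexp : x ⬝ᵥ (kwong p r).mulVec x
      = ∑ i, ∑ j, x i * x j * ((p i ^ r + p j ^ r)/(p i + p j)) := by
    simp only [dotProduct, Matrix.mulVec, kwong, Matrix.of_apply, Finset.mul_sum]
    exact Finset.sum_congr rfl fun i _ => Finset.sum_congr rfl fun j _ => by ring
  set y : Fin n → ℝ := fun i => x i * p i with hy_def
  have hy : y ≠ 0 := by
    obtain ⟨i0, hi0⟩ : ∃ i, x i ≠ 0 := by
      by_contra h; push_neg at h; exact hx (funext h)
    intro h
    have := congrFun h i0
    rw [hy_def] at this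
    simp only [Pi.zero_apply] at this
    exact (mul_ne_zero hi0 (hpos i0).ne') this
  have hident : ∀ i j : Fin n, x i * x j * ((p i ^ r + p j ^ r)/(p i + p j))
      = x i * x j * (p i ^ (r-1) + p j ^ (r-1))
        - y i * y j * ((p i ^ (r-2) + p j ^ (r-2))/(p i + p j)) := by
    intro i j
    rw [kwong_pointwise r (hpos i) (hpos j), hy_def]
    ring
  have hsplit : ∑ i, ∑ j, x i * x j * ((p i ^ r + p j ^ r)/(p i + p j))
      = (∑ i, ∑ j, x i * x j * (p i ^ (r-1) + p j ^ (r-1)))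
        - ∑ i, ∑ j, y i * y j * ((p i ^ (r-2) + p j ^ (r-2))/(p i + p j)) := by
    rw [← Finset.sum_sub_distrib]
    refine Finset.sum_congr rfl fun i _ => ?_
    rw [← Finset.sum_sub_distrib]
    exact Finset.sum_congr rfl fun j _ => hident i j
  have hA : ∑ i, ∑ j, x i * x j * (p i ^ (r-1) + p j ^ (r-1)) = 0 := by
    have hinner : ∀ i : Fin n, ∑ j, x i * x j * (p i ^ (r-1) + p j ^ (r-1))
        = x i * p i ^ (r-1) * (∑ j, x j) + x i * (∑ j, x j * p j ^ (r-1)) := by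
      intro i
      rw [Finset.mul_sum, Finset.mul_sum, ← Finset.sum_add_distrib]
      exact Finset.sum_congr rfl fun j _ => by ring
    rw [Finset.sum_congr rfl fun i _ => hinner i]
    simp only [hsum, mul_zero, zero_add]
    rw [← Finset.sum_mul, hsum, zero_mul]
  have hB : 0 < ∑ i, ∑ j, y i * y j * ((p i ^ (r-2) + p j ^ (r-2))/(p i + p j)) :=
    ks_pos p hpos hinj (by linarith) (by linarith) y hy
  rw [hexp, hsplit, hA]
  linarith
end

section
/- Let p_1 < p_2 and q_1 < q_2 be two ordered pairs of distinct positive real numbers such that {p_1, p_2} ∩ {q_1, q_2} is nonempty, and let r be a positive real number. Then the determinant of the 2×2 matrix whose (i,j) entry is (p_i^r + q_j^r)/(p_i + q_j) is positive if 0 < r < 1 and negative if r > 1. -/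
open Matrix

private lemma kwong_aux1 {u v r : ℝ} (hu : 0 < u) (huv : u < v) (hr1 : r < 1) :
    u * v ^ r < v * u ^ r := by
  have hv : 0 < v := hu.trans huv
  have h : u ^ (1 - r) < v ^ (1 - r) := Real.rpow_lt_rpow hu.le huv (by linarith)
  have e1 : u ^ (1 - r) * u ^ r = u := by
    rw [← Real.rpow_add hu]; norm_num
  have e2 : v ^ (1 - r) * v ^ r = v := by
    rw [← Real.rpow_add hv]; norm_num
  have hur : 0 < u ^ r := Real.rpow_pos_of_pos hu r
  have hvr : 0 < v ^ r := Real.rpow_pos_of_pos hv r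
  calc u * v ^ r = u ^ (1 - r) * u ^ r * v ^ r := by rw [e1]
    _ < v ^ (1 - r) * v ^ r * u ^ r := by
        nlinarith [mul_lt_mul_of_pos_right h (mul_pos hur hvr)]
    _ = v * u ^ r := by rw [e2]

private lemma kwong_aux1' {u v r : ℝ} (hu : 0 < u) (huv : u < v) (hr1 : 1 < r) :
    v * u ^ r < u * v ^ r := by
  have hv : 0 < v := hu.trans huv
  have h : v ^ (1 - r) < u ^ (1 - r) := Real.rpow_lt_rpow_of_neg hu huv (by linarith)
  have e1 : u ^ (1 - r) * u ^ r = u := by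
    rw [← Real.rpow_add hu]; norm_num
  have e2 : v ^ (1 - r) * v ^ r = v := by
    rw [← Real.rpow_add hv]; norm_num
  have hur : 0 < u ^ r := Real.rpow_pos_of_pos hu r
  have hvr : 0 < v ^ r := Real.rpow_pos_of_pos hv r
  calc v * u ^ r = v ^ (1 - r) * v ^ r * u ^ r := by rw [e2]
    _ < u ^ (1 - r) * u ^ r * v ^ r := by
        nlinarith [mul_lt_mul_of_pos_right h (mul_pos hur hvr)]
    _ = u * v ^ r := by rw [e1]

private lemma kwong_aux2 {u v r : ℝ} (hu : 0 < u) (huv : u < v) (hr : 0 < r) :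
    u * u ^ r < v * v ^ r := by
  have hv : 0 < v := hu.trans huv
  have h : u ^ (r + 1) < v ^ (r + 1) := Real.rpow_lt_rpow hu.le huv (by linarith)
  have e1 : u ^ (r + 1) = u * u ^ r := by
    rw [Real.rpow_add hu, Real.rpow_one]; ring
  have e2 : v ^ (r + 1) = v * v ^ r := by
    rw [Real.rpow_add hv, Real.rpow_one]; ring
  rw [← e1, ← e2]; exact h

/-- for ordered pairs `p₁ < p₂` and `q₁ < q₂` of positive reals whose
underlying sets intersect, and `r > 0`, the determinant of the `2 × 2` matrix
`[(pᵢʳ + qⱼʳ)/(pᵢ + qⱼ)]` is positive if `0 < r < 1` and negative if `r > 1`. -/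
theorem det_two_by_two_kwong_type {p₁ p₂ q₁ q₂ : ℝ}
    (hp₁ : 0 < p₁) (hq₁ : 0 < q₁) (hp : p₁ < p₂) (hq : q₁ < q₂)
    (hmeet : p₁ = q₁ ∨ p₁ = q₂ ∨ p₂ = q₁ ∨ p₂ = q₂)
    (r : ℝ) (hr : 0 < r) :
    (r < 1 →
      0 < (!![(p₁ ^ r + q₁ ^ r) / (p₁ + q₁), (p₁ ^ r + q₂ ^ r) / (p₁ + q₂);
              (p₂ ^ r + q₁ ^ r) / (p₂ + q₁), (p₂ ^ r + q₂ ^ r) / (p₂ + q₂)]).det) ∧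
    (1 < r →
      (!![(p₁ ^ r + q₁ ^ r) / (p₁ + q₁), (p₁ ^ r + q₂ ^ r) / (p₁ + q₂);
          (p₂ ^ r + q₁ ^ r) / (p₂ + q₁), (p₂ ^ r + q₂ ^ r) / (p₂ + q₂)]).det < 0) := by
  have hp₂ : 0 < p₂ := hp₁.trans hp
  have hq₂ : 0 < q₂ := hq₁.trans hq
  rw [Matrix.det_fin_two_of]
  have hd11 : 0 < p₁ + q₁ := by linarith
  have hd12 : 0 < p₁ + q₂ := by linarith
  have hd21 : 0 < p₂ + q₁ := by linarith
  have hd22 : 0 < p₂ + q₂ := by linarith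
  rw [div_mul_div_comm, div_mul_div_comm]
  constructor
  · intro hr1
    rw [sub_pos, div_lt_div_iff₀ (by positivity) (by positivity)]
    rcases hmeet with h | h | h | h
    · -- p₁ = q₁ : shared smallest
      subst h
      nlinarith [mul_pos (sub_pos.mpr (kwong_aux1 hp₁ hp hr1))
                   (sub_pos.mpr (kwong_aux2 hp₁ hq hr)),
                 mul_pos (sub_pos.mpr (kwong_aux1 hp₁ hq hr1))
                   (sub_pos.mpr (kwong_aux2 hp₁ hp hr))]
    · -- p₁ = q₂ : shared middle, q₁ < p₁ < p₂
      subst h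
      nlinarith [mul_pos (sub_pos.mpr (kwong_aux1 hq₁ hq hr1))
                   (sub_pos.mpr (kwong_aux2 hp₁ hp hr)),
                 mul_pos (sub_pos.mpr (kwong_aux1 hp₁ hp hr1))
                   (sub_pos.mpr (kwong_aux2 hq₁ hq hr))]
    · -- p₂ = q₁ : shared middle, p₁ < p₂ < q₂
      subst h
      nlinarith [mul_pos (sub_pos.mpr (kwong_aux1 hp₁ hp hr1))
                   (sub_pos.mpr (kwong_aux2 hp₂ hq hr)),
                 mul_pos (sub_pos.mpr (kwong_aux1 hp₂ hq hr1))
                   (sub_pos.mpr (kwong_aux2 hp₁ hp hr))]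
    · -- p₂ = q₂ : shared largest
      subst h
      nlinarith [mul_pos (sub_pos.mpr (kwong_aux1 hp₁ hp hr1))
                   (sub_pos.mpr (kwong_aux2 hq₁ hq hr)),
                 mul_pos (sub_pos.mpr (kwong_aux1 hq₁ hq hr1))
                   (sub_pos.mpr (kwong_aux2 hp₁ hp hr))]
  · intro hr1
    rw [sub_neg, div_lt_div_iff₀ (by positivity) (by positivity)]
    rcases hmeet with h | h | h | h
    · subst h
      nlinarith [mul_pos (sub_pos.mpr (kwong_aux1' hp₁ hp hr1))
                   (sub_pos.mpr (kwong_aux2 hp₁ hq hr)),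
                 mul_pos (sub_pos.mpr (kwong_aux1' hp₁ hq hr1))
                   (sub_pos.mpr (kwong_aux2 hp₁ hp hr))]
    · subst h
      nlinarith [mul_pos (sub_pos.mpr (kwong_aux1' hq₁ hq hr1))
                   (sub_pos.mpr (kwong_aux2 hp₁ hp hr)),
                 mul_pos (sub_pos.mpr (kwong_aux1' hp₁ hp hr1))
                   (sub_pos.mpr (kwong_aux2 hq₁ hq hr))]
    · subst h
      nlinarith [mul_pos (sub_pos.mpr (kwong_aux1' hp₁ hp hr1))
                   (sub_pos.mpr (kwong_aux2 hp₂ hq hr)),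
                 mul_pos (sub_pos.mpr (kwong_aux1' hp₂ hq hr1))
                   (sub_pos.mpr (kwong_aux2 hp₁ hp hr))]
    · subst h
      nlinarith [mul_pos (sub_pos.mpr (kwong_aux1' hp₁ hp hr1))
                   (sub_pos.mpr (kwong_aux2 hq₁ hq hr)),
                 mul_pos (sub_pos.mpr (kwong_aux1' hq₁ hq hr1))
                   (sub_pos.mpr (kwong_aux2 hp₁ hp hr))]
end
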